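/- arXiv:1902.03950 — 7 statements merged into one kernel-verified Lean document; each statement's English description precedes it below -/
import Mathlib

section
/- Let A ∈ ℝ^{m×n} have full row-rank with columns a_1,…,a_n, and assume a_1,…,a_m span ℝ^m. Define the graph G on nodes {1,…,m} with an edge between i_1 and i_2 whenever there exists j > m such that the coordinate vector q_j = [a_1,…,a_m]⁻¹ a_j has nonzero entries in positions i_1 and i_2. Then the clustering number of A equals the number of connected components of G. -/
open Matrix

noncomputable def clusteringNumber {m n : ℕ} (A : Matrix (Fin m) (Fin n) ℝ) : ℕ :=
  sSup {S : ℕ | ∃ U : Fin S → Submodule ℝ (Fin m → ℝ),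
    (∀ i, U i ≠ ⊥) ∧ iSupIndep U ∧ ∀ j : Fin n, ∃ i, (fun k => A k j) ∈ U i}

/-- For a full row-rank matrix whose first `m` columns span `ℝ^m`, the clustering number equals
the number of connected components of the associated graph `G`: nodes `1,…,m`, with an edge
between `i₁` and `i₂` whenever some later column has nonzero coordinates (in the basis of the
first `m` columns) at both positions `i₁` and `i₂`. -/
theorem stmt4 {m n : ℕ} (hmn : m ≤ n) (A : Matrix (Fin m) (Fin n) ℝ)
    (hrank : A.rank = m)
    (hspan : Submodule.span ℝ
      (Set.range fun j : Fin m => (fun i => A i (Fin.castLE hmn j))) = ⊤) :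
    clusteringNumber A =
      Nat.card (SimpleGraph.fromRel fun i₁ i₂ : Fin m =>
        ∃ j : Fin n, m ≤ (j : ℕ) ∧
          ((Matrix.of fun a b : Fin m => A a (Fin.castLE hmn b))⁻¹ *ᵥ (fun i => A i j)) i₁ ≠ 0 ∧
          ((Matrix.of fun a b : Fin m => A a (Fin.castLE hmn b))⁻¹ *ᵥ (fun i => A i j)) i₂ ≠ 0
        ).ConnectedComponent := by
  classical
  set B : Matrix (Fin m) (Fin m) ℝ := Matrix.of fun a b : Fin m => A a (Fin.castLE hmn b) with hBdef
  set G : SimpleGraph (Fin m) := SimpleGraph.fromRel fun i₁ i₂ : Fin m =>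
      ∃ j : Fin n, m ≤ (j : ℕ) ∧ (B⁻¹ *ᵥ (fun i => A i j)) i₁ ≠ 0 ∧
        (B⁻¹ *ᵥ (fun i => A i j)) i₂ ≠ 0 with hGdef
  -- columns and coordinates
  set col : Fin n → (Fin m → ℝ) := fun j => fun i => A i j with hcol
  set q : Fin n → (Fin m → ℝ) := fun j => B⁻¹ *ᵥ col j with hq
  -- B is invertible
  have hspan' : ⊤ ≤ Submodule.span ℝ (Set.range fun i : Fin m => Bᵀ i) := le_of_eq hspan.symm
  have hBu : IsUnit B :=
    Matrix.linearIndependent_cols_iff_isUnit.mp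
      (linearIndependent_of_top_le_span_of_card_eq_finrank hspan' (by simp))
  have hBB : B⁻¹ * B = 1 := Matrix.nonsing_inv_mul B ((Matrix.isUnit_iff_isUnit_det B).mp hBu)
  have hBB' : B * B⁻¹ = 1 := Matrix.mul_nonsing_inv B ((Matrix.isUnit_iff_isUnit_det B).mp hBu)
  have hBq : ∀ j, B *ᵥ q j = col j := by
    intro j
    show B *ᵥ (B⁻¹ *ᵥ col j) = col j
    rw [mulVec_mulVec, hBB', one_mulVec]
  have hinj : ∀ x : Fin m → ℝ, B⁻¹ *ᵥ x = 0 → x = 0 := by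
    intro x hx
    have : B *ᵥ (B⁻¹ *ᵥ x) = 0 := by rw [hx, mulVec_zero]
    rwa [mulVec_mulVec, hBB', one_mulVec] at this
  -- the m basis columns
  have hcolB : ∀ i : Fin m, col (Fin.castLE hmn i) = Bᵀ i := by
    intro i; rfl
  have hqbasis : ∀ i : Fin m, q (Fin.castLE hmn i) = Pi.single i 1 := by
    intro i
    have h1 : col (Fin.castLE hmn i) = B *ᵥ Pi.single i 1 := by
      rw [Matrix.mulVec_single_one]; rfl
    show B⁻¹ *ᵥ col (Fin.castLE hmn i) = _
    rw [h1, mulVec_mulVec, hBB, one_mulVec]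
  have hli : LinearIndependent ℝ (fun i => Bᵀ i) :=
    Matrix.linearIndependent_cols_iff_isUnit.mpr hBu
  -- column as combination
  have hcomb : ∀ j, col j = ∑ i : Fin m, q j i • Bᵀ i := by
    intro j
    rw [← hBq j]
    funext k
    simp [Matrix.mulVec, dotProduct, Finset.sum_apply, mul_comm]
  -- Upper bound
  have hupper : ∀ S : ℕ, (∃ U : Fin S → Submodule ℝ (Fin m → ℝ),
      (∀ i, U i ≠ ⊥) ∧ iSupIndep U ∧ ∀ j : Fin n, ∃ i, (fun k => A k j) ∈ U i) →
      S ≤ Nat.card G.ConnectedComponent := by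
    rintro S ⟨U, hne, hind, hcov⟩
    choose g hg using hcov
    have hg' : ∀ j : Fin n, col j ∈ U (g j) := hg
    set f : Fin m → Fin S := fun i => g (Fin.castLE hmn i) with hf
    have hfmem : ∀ i : Fin m, Bᵀ i ∈ U (f i) := fun i => hg' (Fin.castLE hmn i)
    have hgroup : ∀ (j : Fin n) (s : Fin S), col j ∈ U s →
        ∀ i : Fin m, q j i ≠ 0 → f i = s := by
      intro j s hjs i hqi
      by_contra hne'
      set t := f i with ht
      have hst : s ≠ t := fun h => hne' h.symm
      set u : Fin S → (Fin m → ℝ) :=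
        fun t' => ∑ i' ∈ Finset.univ.filter (fun i' => f i' = t'), q j i' • Bᵀ i' with hu
      have hfib : ∀ t', u t' ∈ U t' := by
        intro t'
        refine Submodule.sum_mem _ ?_
        intro i' hi'
        exact (Finset.mem_filter.mp hi').2 ▸ Submodule.smul_mem _ _ (hfmem i')
      have hsum : ∑ t' : Fin S, u t' = col j := by
        rw [hcomb j, hu]
        exact Finset.sum_fiberwise _ _ _
      have hut : u t = 0 := by
        have hmem2 : u t ∈ ⨆ (t' : Fin S) (_ : t' ≠ t), U t' := by
          have h1 : col j ∈ ⨆ (t' : Fin S) (_ : t' ≠ t), U t' :=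
            Submodule.mem_iSup_of_mem s (Submodule.mem_iSup_of_mem hst hjs)
          have h3 : u t = col j - ∑ t' ∈ Finset.univ.erase t, u t' := by
            rw [← hsum, ← Finset.sum_erase_add Finset.univ u (Finset.mem_univ t)]
            abel
          rw [h3]
          refine Submodule.sub_mem _ h1 (Submodule.sum_mem _ ?_)
          intro t' ht'
          exact Submodule.mem_iSup_of_mem t'
            (Submodule.mem_iSup_of_mem (Finset.ne_of_mem_erase ht') (hfib t'))
        exact Submodule.disjoint_def.mp (iSupIndep_def.mp hind t) _ (hfib t) hmem2
      have hz : ∀ i', (if f i' = t then q j i' else 0) = 0 := by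
        have hs0 : ∑ i' : Fin m, (if f i' = t then q j i' else 0) • Bᵀ i' = 0 := by
          rw [← hut]
          show _ = ∑ i' ∈ Finset.univ.filter (fun i' => f i' = t), q j i' • Bᵀ i'
          rw [Finset.sum_filter]
          exact Finset.sum_congr rfl (fun i' _ => by split <;> simp)
        exact Fintype.linearIndependent_iff.mp hli _ hs0
      have := hz i
      rw [if_pos rfl] at this
      exact hqi this
    have hadjf : ∀ v w : Fin m, G.Adj v w → f v = f w := by
      intro v w hvw
      rw [hGdef, SimpleGraph.fromRel_adj] at hvw
      obtain ⟨-, h | h⟩ := hvw <;> obtain ⟨j, hjm, h1, h2⟩ := h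
      · exact (hgroup j (g j) (hg' j) v h1).trans (hgroup j (g j) (hg' j) w h2).symm
      · exact (hgroup j (g j) (hg' j) v h2).trans (hgroup j (g j) (hg' j) w h1).symm
    have hwalk : ∀ (v w : Fin m) (p : G.Walk v w), f v = f w := by
      intro v w p
      induction p with
      | nil => rfl
      | cons h p ih => exact (hadjf _ _ h).trans ih
    have hFsurj : Function.Surjective
        (SimpleGraph.ConnectedComponent.lift f (fun v w p _ => hwalk v w p) :
          G.ConnectedComponent → Fin S) := by
      intro s
      have hTex : ∃ j : Fin n, col j ∉ ⨆ (t : Fin S) (_ : t ≠ s), U t := by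
        by_contra hc
        push_neg at hc
        have htop : (⊤ : Submodule ℝ (Fin m → ℝ)) ≤ ⨆ (t : Fin S) (_ : t ≠ s), U t := by
          rw [← hspan, Submodule.span_le]
          rintro x ⟨i, rfl⟩
          exact hc (Fin.castLE hmn i)
        exact hne s ((iSupIndep_def.mp hind s).eq_bot_of_le (le_trans le_top htop))
      obtain ⟨j, hj⟩ := hTex
      have hgs : g j = s := by
        by_contra hgs
        exact hj (Submodule.mem_iSup_of_mem (g j) (Submodule.mem_iSup_of_mem hgs (hg' j)))
      have hcolne : col j ≠ 0 := fun h => hj (h ▸ Submodule.zero_mem _)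
      have hqne : q j ≠ 0 := fun h => hcolne (by rw [← hBq j, h, mulVec_zero])
      obtain ⟨i, hi⟩ := Function.ne_iff.mp hqne
      exact ⟨G.connectedComponentMk i, hgroup j s (hgs ▸ hg' j) i hi⟩
    have hfin : Finite G.ConnectedComponent :=
      Finite.of_surjective G.connectedComponentMk (fun c => c.exists_rep)
    have := Nat.card_le_card_of_surjective _ hFsurj
    simpa using this
  -- conclude
  show sSup _ = Nat.card G.ConnectedComponent
  refine le_antisymm (csSup_le' ?_) ?_
  · intro S hS
    exact hupper S hS
  · rcases Nat.eq_zero_or_pos m with hm | hm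
    · have : IsEmpty G.ConnectedComponent := by
        subst hm
        exact ⟨fun c => SimpleGraph.ConnectedComponent.ind (fun v => v.elim0) c⟩
      simp [Nat.card_of_isEmpty]
    · have hfin : Finite G.ConnectedComponent :=
        Finite.of_surjective G.connectedComponentMk (fun c => c.exists_rep)
      set C := Nat.card G.ConnectedComponent with hC
      set e : Fin C ≃ G.ConnectedComponent := (Finite.equivFin G.ConnectedComponent).symm with he
      set V : G.ConnectedComponent → Submodule ℝ (Fin m → ℝ) := fun c =>
        Submodule.comap (Matrix.mulVecLin B⁻¹)
          (Submodule.pi {i | G.connectedComponentMk i ≠ c} (fun _ => ⊥)) with hV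
      have hVmem : ∀ (c) (x : Fin m → ℝ),
          x ∈ V c ↔ ∀ i, G.connectedComponentMk i ≠ c → (B⁻¹ *ᵥ x) i = 0 := by
        intro c x
        simp [hV, Submodule.mem_pi, Matrix.mulVecLin_apply]
      have hsingle : ∀ i : Fin m, B⁻¹ *ᵥ Bᵀ i = Pi.single i 1 := by
        intro i
        rw [← hcolB i]
        exact hqbasis i
      have hCmem : ∃ U : Fin C → Submodule ℝ (Fin m → ℝ),
          (∀ i, U i ≠ ⊥) ∧ iSupIndep U ∧ ∀ j : Fin n, ∃ i, (fun k => A k j) ∈ U i := by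
        refine ⟨fun c => V (e c), ?_, ?_, ?_⟩
        · intro c
          obtain ⟨i, hi⟩ := (e c).exists_rep
          rw [Submodule.ne_bot_iff]
          refine ⟨Bᵀ i, ?_, ?_⟩
          · rw [hVmem]
            intro i' hi'
            rw [hsingle]
            rcases eq_or_ne i' i with rfl | hne'
            · exact absurd hi hi'
            · exact Pi.single_eq_of_ne hne' 1
          · intro h
            have h0 : (0 : Fin m → ℝ) = Pi.single i 1 := by
              rw [← hsingle, h, mulVec_zero]
            have := congrFun h0 i
            rw [Pi.single_eq_same] at this
            exact one_ne_zero this.symm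
        · rw [iSupIndep_def]
          intro c
          rw [Submodule.disjoint_def]
          intro x hxc hxs
          have hsup : (⨆ (d : Fin C) (_ : d ≠ c), V (e d)) ≤
              Submodule.comap (Matrix.mulVecLin B⁻¹)
                (Submodule.pi {i | G.connectedComponentMk i = e c} (fun _ => ⊥)) := by
            refine iSup_le fun d => iSup_le fun hd => ?_
            intro y hy
            simp only [Submodule.mem_comap, Submodule.mem_pi, Submodule.mem_bot,
              Set.mem_setOf_eq, Matrix.mulVecLin_apply]
            intro i hi
            refine (hVmem _ _).mp hy i ?_
            rw [hi]
            exact fun h => hd (e.injective h.symm)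
          have hx0 : B⁻¹ *ᵥ x = 0 := by
            funext i
            by_cases hic : G.connectedComponentMk i = e c
            · have := hsup hxs
              simp only [Submodule.mem_comap, Submodule.mem_pi, Submodule.mem_bot,
                Set.mem_setOf_eq, Matrix.mulVecLin_apply] at this
              exact this i hic
            · exact (hVmem _ _).mp hxc i hic
          exact hinj x hx0
        · intro j
          show ∃ c, col j ∈ V (e c)
          by_cases hq0 : q j = 0
          · refine ⟨e.symm (G.connectedComponentMk ⟨0, hm⟩), ?_⟩
            rw [hVmem]
            intro i _
            show q j i = 0
            rw [hq0]; rfl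
          · obtain ⟨i₀, hi₀⟩ := Function.ne_iff.mp hq0
            refine ⟨e.symm (G.connectedComponentMk i₀), ?_⟩
            rw [hVmem]
            simp only [Equiv.apply_symm_apply]
            intro i hi
            show q j i = 0
            by_contra hqi
            apply hi
            rcases eq_or_ne i i₀ with rfl | hne'
            · rfl
            · rcases lt_or_ge (j : ℕ) m with hjm | hjm
              · exfalso
                set j' : Fin m := ⟨(j : ℕ), hjm⟩ with hj'
                have hjj : Fin.castLE hmn j' = j := by
                  apply Fin.ext
                  rfl
                have hqj' : q j = Pi.single j' 1 := by
                  rw [← hjj]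
                  exact hqbasis j'
                have hii : i = j' := by
                  by_contra h
                  exact hqi (by rw [hqj']; exact Pi.single_eq_of_ne h 1)
                have hii0 : i₀ = j' := by
                  by_contra h
                  exact hi₀ (by rw [hqj']; exact Pi.single_eq_of_ne h 1)
                exact hne' (hii.trans hii0.symm)
              · refine SimpleGraph.ConnectedComponent.connectedComponentMk_eq_of_adj ?_
                rw [hGdef, SimpleGraph.fromRel_adj]
                exact ⟨hne', Or.inl ⟨j, hjm, hqi, hi₀⟩⟩
      exact le_csSup ⟨C, fun S hS => hupper S hS⟩ hCmem
end

section
/- Let A ∈ ℝ^{m×n} have full row-rank and no zero columns. Let S be the vector space of pairs (M, ξ) with M ∈ ℝ^{m×m} and ξ ∈ ℝ^n satisfying M A = A diag(ξ_1,…,ξ_n). Then cl⊕(A) = dim(S). -/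
/-- The solution space of the linear system `M A = A diag(ξ)`. -/
noncomputable def solSpace {m n : ℕ} (A : Matrix (Fin m) (Fin n) ℝ) :
    Submodule ℝ (Matrix (Fin m) (Fin m) ℝ × (Fin n → ℝ)) where
  carrier := {p | p.1 * A = A * Matrix.diagonal p.2}
  add_mem' := by
    intro a b ha hb
    simp only [Set.mem_setOf_eq, Prod.fst_add, Prod.snd_add] at *
    have hd : Matrix.diagonal (a.2 + b.2) = Matrix.diagonal a.2 + Matrix.diagonal b.2 := by
      ext i j; by_cases h : i = j <;> simp [Matrix.diagonal_apply, h]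
    rw [Matrix.add_mul, ha, hb, hd, Matrix.mul_add]
  zero_mem' := by
    simp only [Set.mem_setOf_eq, Prod.fst_zero, Prod.snd_zero]
    have hd : Matrix.diagonal (0 : Fin n → ℝ) = 0 := by
      ext i j; by_cases h : i = j <;> simp [Matrix.diagonal_apply, h]
    rw [Matrix.zero_mul, hd, Matrix.mul_zero]
  smul_mem' := by
    intro c a ha
    simp only [Set.mem_setOf_eq, Prod.smul_fst, Prod.smul_snd] at *
    rw [Matrix.smul_mul, ha, Matrix.diagonal_smul, Matrix.mul_smul]

namespace Stmt5Aux

attribute [local instance] Classical.propDecidable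

variable {m n : ℕ}

/-- column j of A -/
def col (A : Matrix (Fin m) (Fin n) ℝ) (j : Fin n) : Fin m → ℝ := fun i => A i j

lemma mem_solSpace_iff (A : Matrix (Fin m) (Fin n) ℝ) (M : Matrix (Fin m) (Fin m) ℝ)
    (ξ : Fin n → ℝ) :
    (M, ξ) ∈ solSpace A ↔ ∀ j, M.mulVec (col A j) = ξ j • col A j := by
  have key : ∀ i j, ((M * A) i j = (A * Matrix.diagonal ξ) i j) ↔
      (M.mulVec (col A j) i = (ξ j • col A j) i) := by
    intro i j
    rw [Matrix.mul_apply, Matrix.mul_diagonal]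
    simp [Matrix.mulVec, dotProduct, col, mul_comm]
  constructor
  · intro h j
    funext i
    exact (key i j).1 (congrFun (congrFun h i) j)
  · intro h
    funext i j
    exact (key i j).2 (congrFun (h j) i)

lemma span_cols (A : Matrix (Fin m) (Fin n) ℝ) (hrank : A.rank = m) :
    Submodule.span ℝ (Set.range (col A)) = ⊤ := by
  have h1 : LinearMap.range A.mulVecLin = Submodule.span ℝ (Set.range A.transpose) :=
    Matrix.range_mulVecLin A
  have h2 : Set.range A.transpose = Set.range (col A) := rfl
  rw [h2] at h1
  rw [← h1]
  apply Submodule.eq_top_of_finrank_eq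
  rw [show Module.finrank ℝ (LinearMap.range A.mulVecLin) = A.rank from rfl, hrank,
    Module.finrank_fin_fun]

/-- If a linear map kills all columns and the columns span, it is zero;
here: a matrix in the solution space with zero eigenvalue vector is zero. -/
lemma fst_eq_zero (A : Matrix (Fin m) (Fin n) ℝ) (hrank : A.rank = m)
    (M : Matrix (Fin m) (Fin m) ℝ) (h : (M, (0 : Fin n → ℝ)) ∈ solSpace A) : M = 0 := by
  rw [mem_solSpace_iff] at h
  have hker : Submodule.span ℝ (Set.range (col A)) ≤ LinearMap.ker (Matrix.toLin' M) := by
    rw [Submodule.span_le]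
    rintro _ ⟨j, rfl⟩
    simp only [SetLike.mem_coe, LinearMap.mem_ker, Matrix.toLin'_apply]
    simpa using h j
  rw [span_cols A hrank] at hker
  have hlin : Matrix.toLin' M = 0 := by
    apply LinearMap.ext
    intro v
    exact hker (Submodule.mem_top : v ∈ ⊤)
  have := congrArg LinearMap.toMatrix' hlin
  rwa [LinearMap.toMatrix'_toLin', map_zero] at this

/-- The image of `solSpace A` under the second projection. -/
noncomputable def T (A : Matrix (Fin m) (Fin n) ℝ) : Submodule ℝ (Fin n → ℝ) :=
  (solSpace A).map (LinearMap.snd ℝ _ _)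

lemma finrank_T_eq (A : Matrix (Fin m) (Fin n) ℝ) (hrank : A.rank = m) :
    Module.finrank ℝ (T A) = Module.finrank ℝ (solSpace A) := by
  let f : solSpace A →ₗ[ℝ] (Fin n → ℝ) := (LinearMap.snd ℝ _ _).comp (solSpace A).subtype
  have hker : LinearMap.ker f = ⊥ := by
    rw [LinearMap.ker_eq_bot']
    rintro ⟨⟨M, ξ⟩, hmem⟩ h
    have hξ : ξ = 0 := h
    subst hξ
    have : M = 0 := fst_eq_zero A hrank M hmem
    subst this
    rfl
  have hrange : LinearMap.range f = T A := by
    rw [show f = (LinearMap.snd ℝ _ _).comp (solSpace A).subtype from rfl, LinearMap.range_comp,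
      Submodule.range_subtype]
    rfl
  rw [← hrange]
  exact LinearMap.finrank_range_of_inj (LinearMap.ker_eq_bot.mp hker)

lemma one_mem_T (A : Matrix (Fin m) (Fin n) ℝ) : (1 : Fin n → ℝ) ∈ T A := by
  have h : ((1 : Matrix (Fin m) (Fin m) ℝ), (1 : Fin n → ℝ)) ∈ solSpace A := by
    rw [mem_solSpace_iff]
    intro j
    rw [Matrix.one_mulVec]
    simp
  exact ⟨(1, 1), h, rfl⟩

lemma mul_mem_T (A : Matrix (Fin m) (Fin n) ℝ) :
    ∀ ξ ∈ T A, ∀ η ∈ T A, ξ * η ∈ T A := by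
  rintro _ ⟨⟨M, ξ⟩, hM, rfl⟩ _ ⟨⟨N, η⟩, hN, rfl⟩
  have hM' : (M, ξ) ∈ solSpace A := hM
  have hN' : (N, η) ∈ solSpace A := hN
  rw [mem_solSpace_iff] at hM' hN'
  have h : (M * N, ξ * η) ∈ solSpace A := by
    rw [mem_solSpace_iff]
    intro j
    rw [← Matrix.mulVec_mulVec, hN' j, Matrix.mulVec_smul, hM' j]
    funext i
    simp [mul_comm, mul_assoc, mul_left_comm]
  exact ⟨(M * N, ξ * η), h, rfl⟩

/-! ### The clustering setoid -/

def sE (T' : Submodule ℝ (Fin n → ℝ)) : Setoid (Fin n) :=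
  ⟨fun j k => ∀ ξ ∈ T', ξ j = ξ k,
   ⟨fun _ _ _ => rfl, fun h ξ hξ => (h ξ hξ).symm, fun h h' ξ hξ => (h ξ hξ).trans (h' ξ hξ)⟩⟩

noncomputable instance (T' : Submodule ℝ (Fin n → ℝ)) : Fintype (Quotient (sE T')) :=
  Quotient.fintype _

noncomputable def χ (T' : Submodule ℝ (Fin n → ℝ)) (q : Quotient (sE T')) : Fin n → ℝ :=
  fun j => if Quotient.mk (sE T') j = q then 1 else 0

variable (T' : Submodule ℝ (Fin n → ℝ)) (h1 : (1 : Fin n → ℝ) ∈ T')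
  (hmul : ∀ ξ ∈ T', ∀ η ∈ T', ξ * η ∈ T')

lemma rel_of_eq {j k : Fin n} (h : Quotient.mk (sE T') j = Quotient.mk (sE T') k) :
    ∀ ξ ∈ T', ξ j = ξ k := Quotient.exact h

include h1 hmul in
lemma chi_mem (q : Quotient (sE T')) : χ T' q ∈ T' := by
  have hW : ∀ q' : Quotient (sE T'), ∃ ξ, ξ ∈ T' ∧
      (q' ≠ q → ξ (Quotient.out q) ≠ ξ (Quotient.out q')) := by
    intro q'
    by_cases hq : q' = q
    · exact ⟨1, h1, fun h => absurd hq h⟩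
    · have : ¬ (∀ ξ ∈ T', ξ (Quotient.out q) = ξ (Quotient.out q')) := by
        intro hr
        apply hq
        have : Quotient.mk (sE T') (Quotient.out q) = Quotient.mk (sE T') (Quotient.out q') :=
          Quotient.sound hr
        rw [Quotient.out_eq, Quotient.out_eq] at this
        exact this.symm
      push_neg at this
      obtain ⟨ξ, hξT, hne⟩ := this
      exact ⟨ξ, hξT, fun _ => hne⟩
  choose w hwT hwne using hW
  set F : Quotient (sE T') → (Fin n → ℝ) := fun q' =>
    (w q' (Quotient.out q) - w q' (Quotient.out q'))⁻¹ •
      (w q' - (w q' (Quotient.out q')) • (1 : Fin n → ℝ)) with hF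
  have hFT : ∀ q', F q' ∈ T' :=
    fun q' => T'.smul_mem _ (T'.sub_mem (hwT q') (T'.smul_mem _ h1))
  have hprod : ∀ (s : Finset (Quotient (sE T'))), (∏ q' ∈ s, F q') ∈ T' := by
    intro s
    refine Finset.prod_induction F (· ∈ T') (fun a b ha hb => hmul a ha b hb) h1 ?_
    exact fun q' _ => hFT q'
  have key : ∏ q' ∈ Finset.univ.erase q, F q' = χ T' q := by
    funext l
    rw [Finset.prod_apply]
    by_cases hl : Quotient.mk (sE T') l = q
    · have hrel : ∀ ξ ∈ T', ξ l = ξ (Quotient.out q) := by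
        intro ξ hξ
        exact rel_of_eq T' (by rw [hl, Quotient.out_eq]) ξ hξ
      have : ∀ q' ∈ Finset.univ.erase q, F q' l = 1 := by
        intro q' hq'
        have hq'ne : q' ≠ q := (Finset.mem_erase.mp hq').1
        have hval : w q' l = w q' (Quotient.out q) := hrel _ (hwT q')
        simp only [hF, Pi.smul_apply, Pi.sub_apply, Pi.one_apply, smul_eq_mul, mul_one]
        rw [hval]
        exact inv_mul_cancel₀ (sub_ne_zero.mpr (hwne q' hq'ne))
      rw [Finset.prod_congr rfl this, Finset.prod_const_one, χ, if_pos hl]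
    · set q'' := Quotient.mk (sE T') l with hq''
      have hmem : q'' ∈ Finset.univ.erase q := Finset.mem_erase.mpr ⟨hl, Finset.mem_univ _⟩
      have hzero : F q'' l = 0 := by
        have hval : w q'' l = w q'' (Quotient.out q'') :=
          rel_of_eq T' (by rw [Quotient.out_eq]) _ (hwT q'')
        simp only [hF, Pi.smul_apply, Pi.sub_apply, Pi.one_apply, smul_eq_mul, mul_one]
        rw [hval, sub_self, mul_zero]
      rw [Finset.prod_eq_zero hmem hzero, χ, if_neg hl]
  rw [← key]
  exact hprod _

include h1 hmul in
lemma finrank_eq_card : Module.finrank ℝ T' = Fintype.card (Quotient (sE T')) := by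
  have hli : LinearIndependent ℝ (χ T') := by
    rw [Fintype.linearIndependent_iff]
    intro g hg q
    have := congrFun hg (Quotient.out q)
    simp only [Finset.sum_apply, Pi.smul_apply, χ, smul_eq_mul, mul_ite, mul_one, mul_zero,
      Quotient.out_eq, Pi.zero_apply] at this
    rwa [Finset.sum_ite_eq Finset.univ q g, if_pos (Finset.mem_univ q)] at this
  have hspan : T' = Submodule.span ℝ (Set.range (χ T')) := by
    apply le_antisymm
    · intro ξ hξ
      have hrepr : ξ = ∑ q : Quotient (sE T'), ξ (Quotient.out q) • χ T' q := by
        funext j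
        simp only [Finset.sum_apply, Pi.smul_apply, χ, smul_eq_mul, mul_ite, mul_one, mul_zero]
        rw [Finset.sum_ite_eq Finset.univ (Quotient.mk (sE T') j)
          (fun q => ξ (Quotient.out q)), if_pos (Finset.mem_univ _)]
        exact (rel_of_eq T' (by rw [Quotient.out_eq]) ξ hξ)
      rw [hrepr]
      exact Submodule.sum_mem _ fun q _ =>
        Submodule.smul_mem _ _ (Submodule.subset_span ⟨q, rfl⟩)
    · rw [Submodule.span_le]
      rintro _ ⟨q, rfl⟩
      exact chi_mem T' h1 hmul q
  conv_lhs => rw [hspan]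
  exact finrank_span_eq_card hli


/-! ### Lower bound: the number of classes is attained -/

lemma card_mem (A : Matrix (Fin m) (Fin n) ℝ) (hcols : ∀ j, (fun i => A i j) ≠ 0) :
    ∃ U : Fin (Fintype.card (Quotient (sE (T A)))) → Submodule ℝ (Fin m → ℝ),
      (∀ i, U i ≠ ⊥) ∧ iSupIndep U ∧ ∀ j : Fin n, ∃ i, (fun k => A k j) ∈ U i := by
  set Q := Quotient (sE (T A)) with hQ
  let e : Fin (Fintype.card Q) ≃ Q := (Fintype.equivFin Q).symm
  set U : Fin (Fintype.card Q) → Submodule ℝ (Fin m → ℝ) := fun i =>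
    Submodule.span ℝ (col A '' {j | Quotient.mk (sE (T A)) j = e i}) with hU
  have hM : ∀ q : Q, ∃ M : Matrix (Fin m) (Fin m) ℝ,
      ∀ j, M.mulVec (col A j) = χ (T A) q j • col A j := by
    intro q
    obtain ⟨⟨M, ξ⟩, hmem, hsnd⟩ := chi_mem (T A) (one_mem_T A) (mul_mem_T A) q
    have hξ : ξ = χ (T A) q := hsnd
    subst hξ
    exact ⟨M, (mem_solSpace_iff A M _).1 hmem⟩
  choose Mq hMq using hM
  refine ⟨U, ?_, ?_, ?_⟩
  · intro i
    rw [Submodule.ne_bot_iff]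
    refine ⟨col A (Quotient.out (e i)), ?_, hcols _⟩
    exact Submodule.subset_span ⟨Quotient.out (e i), Quotient.out_eq _, rfl⟩
  · intro i
    rw [Submodule.disjoint_def]
    intro x hxU hxS
    set N := Matrix.toLin' (Mq (e i)) with hN
    have hid : U i ≤ LinearMap.ker (N - LinearMap.id) := by
      rw [hU, Submodule.span_le]
      rintro _ ⟨j, hj, rfl⟩
      simp only [SetLike.mem_coe, LinearMap.mem_ker, LinearMap.sub_apply, LinearMap.id_apply,
        sub_eq_zero, hN, Matrix.toLin'_apply]
      rw [hMq (e i) j]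
      have hj' : Quotient.mk (sE (T A)) j = e i := hj
      simp [χ, hj']
    have hzero : (⨆ (i' : Fin (Fintype.card Q)) (_ : i' ≠ i), U i') ≤ LinearMap.ker N := by
      refine iSup_le fun i' => iSup_le fun hi' => ?_
      rw [hU, Submodule.span_le]
      rintro _ ⟨j, hj, rfl⟩
      simp only [SetLike.mem_coe, LinearMap.mem_ker, hN, Matrix.toLin'_apply]
      rw [hMq (e i) j]
      have hj' : Quotient.mk (sE (T A)) j = e i' := hj
      have hne : Quotient.mk (sE (T A)) j ≠ e i := by
        rw [hj']; exact fun h => hi' (e.injective h)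
      simp [χ, hne]
    have h1 : N x = x := by
      have := hid hxU
      rw [LinearMap.mem_ker, LinearMap.sub_apply, LinearMap.id_apply, sub_eq_zero] at this
      exact this
    have h2 : N x = 0 := hzero hxS
    rw [← h1, h2]
  · intro j
    refine ⟨e.symm (Quotient.mk (sE (T A)) j), ?_⟩
    have : col A j ∈ U (e.symm (Quotient.mk (sE (T A)) j)) := by
      apply Submodule.subset_span
      exact ⟨j, (e.apply_symm_apply _).symm, rfl⟩
    exact this

/-! ### Upper bound -/

lemma le_finrank (A : Matrix (Fin m) (Fin n) ℝ) (hrank : A.rank = m) (S : ℕ)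
    (h : ∃ U : Fin S → Submodule ℝ (Fin m → ℝ),
      (∀ i, U i ≠ ⊥) ∧ iSupIndep U ∧ ∀ j : Fin n, ∃ i, (fun k => A k j) ∈ U i) :
    S ≤ Module.finrank ℝ (solSpace A) := by
  obtain ⟨U, hbot, hind, hcov⟩ := h
  have hsup : (⨆ i, U i) = ⊤ := by
    rw [eq_top_iff, ← span_cols A hrank, Submodule.span_le]
    rintro _ ⟨j, rfl⟩
    obtain ⟨i, hi⟩ := hcov j
    exact Submodule.mem_iSup_of_mem i hi
  have hint : DirectSum.IsInternal U :=
    (DirectSum.isInternal_submodule_iff_iSupIndep_and_iSup_eq_top U).2 ⟨hind, hsup⟩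
  set E := LinearEquiv.ofBijective (DirectSum.coeLinearMap U) hint with hE
  set P : Fin S → ((Fin m → ℝ) →ₗ[ℝ] (Fin m → ℝ)) := fun i =>
    (U i).subtype ∘ₗ DirectSum.component ℝ (Fin S) (fun k => U k) i ∘ₗ
      (E.symm : (Fin m → ℝ) →ₗ[ℝ] _) with hP
  have hPval : ∀ (i j : Fin S) (x : Fin m → ℝ), x ∈ U j → P i x = if i = j then x else 0 := by
    intro i j x hx
    by_cases hij : i = j
    · subst hij
      have h' : (E.symm x) i = ⟨x, hx⟩ := hint.ofBijective_coeLinearMap_of_mem hx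
      simp only [hP, LinearMap.comp_apply, Submodule.subtype_apply, LinearEquiv.coe_coe,
        if_pos rfl]
      rw [← DirectSum.apply_eq_component, h']
      simp
    · have h' : (E.symm x) i = 0 := hint.ofBijective_coeLinearMap_of_mem_ne (Ne.symm hij) hx
      simp only [hP, LinearMap.comp_apply, Submodule.subtype_apply, LinearEquiv.coe_coe,
        if_neg hij]
      rw [← DirectSum.apply_eq_component, h', Submodule.coe_zero]
  choose σ hσ using hcov
  set Mi : Fin S → Matrix (Fin m) (Fin m) ℝ := fun i => LinearMap.toMatrix' (P i) with hMi
  set ξi : Fin S → (Fin n → ℝ) := fun i j => if σ j = i then (1 : ℝ) else 0 with hξi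
  have hmemi : ∀ i, (Mi i, ξi i) ∈ solSpace A := by
    intro i
    rw [mem_solSpace_iff]
    intro j
    have hmv : (Mi i).mulVec (col A j) = P i (col A j) := by
      rw [hMi, ← Matrix.toLin'_apply, Matrix.toLin'_toMatrix']
    rw [hmv, hPval i (σ j) (col A j) (hσ j)]
    by_cases hc : σ j = i
    · rw [if_pos hc.symm]
      simp [hξi, hc]
    · rw [if_neg (fun h => hc h.symm)]
      simp [hξi, hc]
  set v : Fin S → solSpace A := fun i => ⟨(Mi i, ξi i), hmemi i⟩ with hv
  have hli : LinearIndependent ℝ v := by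
    rw [Fintype.linearIndependent_iff]
    intro g hg i
    obtain ⟨u, hu, hune⟩ := (U i).ne_bot_iff.1 (hbot i)
    have h0 : (∑ k, g k • (Mi k, ξi k) :
        Matrix (Fin m) (Fin m) ℝ × (Fin n → ℝ)) = 0 := by
      have := congrArg (Submodule.subtype (solSpace A)) hg
      rw [map_sum, map_zero] at this
      simpa [hv] using this
    have h1 : (∑ k, g k • Mi k) = 0 := by
      have := congrArg Prod.fst h0
      rw [Prod.fst_sum] at this
      simpa using this
    have h2 : (∑ k, g k • P k) = 0 := by
      have := congrArg Matrix.toLin' h1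
      rw [map_sum, map_zero] at this
      convert this using 2 with k
      rw [map_smul, hMi, Matrix.toLin'_toMatrix']
    have h3 : (∑ k, g k • P k) u = 0 := by rw [h2]; rfl
    rw [LinearMap.sum_apply] at h3
    have h4 : ∀ k, (g k • P k) u = if k = i then g k • u else 0 := by
      intro k
      rw [LinearMap.smul_apply, hPval k i u hu]
      by_cases hk : k = i
      · rw [if_pos hk, if_pos hk]
      · rw [if_neg hk, if_neg hk, smul_zero]
    rw [Finset.sum_congr rfl (fun k _ => h4 k), Finset.sum_ite_eq' Finset.univ i
      (fun k => g k • u), if_pos (Finset.mem_univ i)] at h3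
    rcases smul_eq_zero.mp h3 with h | h
    · exact h
    · exact absurd h hune
  have := hli.fintype_card_le_finrank
  simpa using this

end Stmt5Aux

/-- For a full row-rank matrix with no zero columns, the clustering number equals the dimension
of the solution space of the linear system `M A = A diag(ξ)`. -/
theorem stmt5 {m n : ℕ} (A : Matrix (Fin m) (Fin n) ℝ)
    (hrank : A.rank = m) (hcols : ∀ j, (fun i => A i j) ≠ 0) :
    clusteringNumber A = Module.finrank ℝ (solSpace A) := by
  classical
  have hd : Module.finrank ℝ (solSpace A)
      = Fintype.card (Quotient (Stmt5Aux.sE (Stmt5Aux.T A))) :=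
    (Stmt5Aux.finrank_T_eq A hrank).symm.trans
      (Stmt5Aux.finrank_eq_card (Stmt5Aux.T A) (Stmt5Aux.one_mem_T A) (Stmt5Aux.mul_mem_T A))
  have hmem : Module.finrank ℝ (solSpace A) ∈ {S : ℕ | ∃ U : Fin S → Submodule ℝ (Fin m → ℝ),
      (∀ i, U i ≠ ⊥) ∧ iSupIndep U ∧ ∀ j : Fin n, ∃ i, (fun k => A k j) ∈ U i} := by
    rw [Set.mem_setOf_eq, hd]
    exact Stmt5Aux.card_mem A hcols
  have hub : ∀ S ∈ {S : ℕ | ∃ U : Fin S → Submodule ℝ (Fin m → ℝ),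
      (∀ i, U i ≠ ⊥) ∧ iSupIndep U ∧ ∀ j : Fin n, ∃ i, (fun k => A k j) ∈ U i},
      S ≤ Module.finrank ℝ (solSpace A) := fun S hS => Stmt5Aux.le_finrank A hrank S hS
  unfold clusteringNumber
  exact le_antisymm (csSup_le ⟨_, hmem⟩ hub) (le_csSup ⟨_, hub⟩ hmem)
end

section
/- Let A ∈ ℝ^{m×n} have rank r and exactly Z zero columns. Let S be the vector space of pairs (M, ξ) ∈ ℝ^{m×m} × ℝ^n with M A = A diag(ξ). Then dim(S) = cl⊕(A) + (m−1)(m−r) + Z. -/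
open Module Function

theorem iSupIndep.sumElim {α ι κ : Type*} [CompleteLattice α] [IsModularLattice α]
    {p : ι → α} {q : κ → α} (hp : iSupIndep p) (hq : iSupIndep q)
    (hpq : Disjoint (⨆ i, p i) (⨆ k, q k)) : iSupIndep (Sum.elim p q) := by
  rintro (i | k)
  · have hsup : ⨆ (x) (_ : x ≠ Sum.inl i), Sum.elim p q x =
        (⨆ (i') (_ : i' ≠ i), p i') ⊔ ⨆ k, q k := by
      simp [iSup_sum]
    rw [hsup]
    exact (hp i).disjoint_sup_right_of_disjoint_sup_left <|
      hpq.mono_left <| sup_le (le_iSup p i) (iSup₂_le fun i' _ => le_iSup p i')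
  · have hsup : ⨆ (x) (_ : x ≠ Sum.inr k), Sum.elim p q x =
        (⨆ (k') (_ : k' ≠ k), q k') ⊔ ⨆ i, p i := by
      simp [iSup_sum, sup_comm]
    rw [hsup]
    exact (hq k).disjoint_sup_right_of_disjoint_sup_left <|
      hpq.symm.mono_left <| sup_le (le_iSup q k) (iSup₂_le fun k' _ => le_iSup q k')

section VectorSpace

variable {K V : Type*} [Field K] [AddCommGroup V] [Module K V]

theorem Disjoint.exists_linearMap_eq_self_and_eq_zero {p q : Submodule K V} (h : Disjoint p q) :
    ∃ f : Module.End K V, (∀ x ∈ p, f x = x) ∧ ∀ x ∈ q, f x = 0 := by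
  obtain ⟨q', hqq', hc⟩ := h.symm.exists_isCompl
  refine ⟨LinearMap.ofIsCompl hc 0 p.subtype, fun x hx => ?_, fun x hx => ?_⟩
  · exact LinearMap.ofIsCompl_apply_right hc ⟨x, hx⟩
  · exact LinearMap.ofIsCompl_apply_left hc ⟨x, hqq' hx⟩

theorem iSupIndep.card_add_finrank_le [FiniteDimensional K V] {ι : Type*} [Fintype ι]
    {p : ι → Submodule K V} (hp : iSupIndep p) (hne : ∀ i, p i ≠ ⊥) {C : Submodule K V}
    (hC : Disjoint (⨆ i, p i) C) : Fintype.card ι + finrank K C ≤ finrank K V := by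
  choose v hvp hv0 using fun i => Submodule.exists_mem_ne_zero_of_ne_bot (hne i)
  have hspan : Submodule.span K (Set.range v) ≤ ⨆ i, p i :=
    Submodule.span_le.2 <| Set.range_subset_iff.2 fun i => Submodule.mem_iSup_of_mem i (hvp i)
  have := Submodule.finrank_sup_add_finrank_inf_eq (Submodule.span K (Set.range v)) C
  rw [(hC.mono_left hspan).eq_bot, finrank_bot, add_zero,
    finrank_span_eq_card (hp.linearIndependent p hvp hv0)] at this
  exact this ▸ Submodule.finrank_le _

theorem iSupIndep_span_image_preimage_singleton {ι : Type*} {f : Module.End K V} {v : ι → V}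
    {ξ : ι → K} (hf : ∀ j, f (v j) = ξ j • v j) :
    iSupIndep fun c => Submodule.span K (v '' (ξ ⁻¹' {c})) :=
  (Module.End.eigenspaces_iSupIndep f).mono fun c => Submodule.span_le.2 <| by
    rintro _ ⟨j, hj, rfl⟩
    exact Module.End.mem_eigenspace_iff.2 (hj ▸ hf j)

end VectorSpace

section FunctionSpace

variable {K ι : Type*} [Field K]

theorem Submodule.exists_mem_forall_factorsThrough [Finite ι] [Infinite K]
    (F : Submodule K (ι → K)) : ∃ ξ₀ ∈ F, ∀ ξ ∈ F, ξ.FactorsThrough ξ₀ := by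
  let P := {ab : ι × ι // ∃ ξ ∈ F, ξ ab.1 ≠ ξ ab.2}
  obtain ⟨ξ₀, hξ₀, hsep⟩ := Module.Dual.exists_forall_mem_ne_zero_of_forall_exists F
    (fun ab : P => LinearMap.proj (R := K) (φ := fun _ => K) ab.1.1 - LinearMap.proj ab.1.2)
    (fun ⟨_, ξ, hξ, hne⟩ => ⟨ξ, hξ, sub_ne_zero.2 hne⟩)
  refine ⟨ξ₀, hξ₀, fun ξ hξ a b hab => ?_⟩
  by_contra hne
  exact hsep ⟨(a, b), ξ, hξ, hne⟩ (sub_eq_zero.2 hab)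

theorem Submodule.finrank_le_card_image_of_factorsThrough [Fintype ι] {κ : Type*} [DecidableEq κ]
    (F : Submodule K (ι → K)) (g : ι → κ) (h : ∀ ξ ∈ F, ξ.FactorsThrough g) :
    finrank K F ≤ (Finset.univ.image g).card := by
  let g' : ι → Finset.univ.image g := fun i => ⟨g i, Finset.mem_image_of_mem g (Finset.mem_univ i)⟩
  have hF : F ≤ LinearMap.range (LinearMap.funLeft K K g') := fun ξ hξ =>
    have hξg' : ξ.FactorsThrough g' := fun _ _ hab => h ξ hξ (congrArg Subtype.val hab)
    ⟨extend g' ξ 0, funext fun i => hξg'.extend_apply 0 i⟩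
  calc finrank K F ≤ finrank K (LinearMap.range (LinearMap.funLeft K K g')) :=
        Submodule.finrank_mono hF
    _ ≤ finrank K (Finset.univ.image g → K) := LinearMap.finrank_range_le _
    _ = _ := by simp

theorem Submodule.card_le_finrank_of_indicator_mem [Finite ι] {κ : Type*} [Fintype κ]
    (F : Submodule K (ι → K)) (s : κ → Set ι) (hdisj : Pairwise (Disjoint on s))
    (hne : ∀ k, (s k).Nonempty) (hF : ∀ k, (s k).indicator 1 ∈ F) :
    Fintype.card κ ≤ finrank K F := by
  classical
  have hli : LinearIndependent K fun k => (s k).indicator (1 : ι → K) := by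
    rw [Fintype.linearIndependent_iff]
    intro c hc k
    obtain ⟨x, hx⟩ := hne k
    have := congrFun hc x
    rw [Finset.sum_apply, Finset.sum_eq_single k] at this
    · simpa [Set.indicator_of_mem hx] using this
    · intro l _ hlk
      simp [Set.indicator_of_notMem ((hdisj hlk).notMem_of_mem_right hx)]
    · simp
  have : LinearIndependent K fun k => (⟨_, hF k⟩ : F) := .of_comp F.subtype hli
  simpa using this.fintype_card_le_finrank

end FunctionSpace

namespace Matrix

theorem mul_eq_mul_diagonal_iff {R l o : Type*} [CommSemiring R] [Fintype l] [Fintype o]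
    [DecidableEq o] {A : Matrix l o R} {M : Matrix l l R} {ξ : o → R} :
    M * A = A * diagonal ξ ↔ ∀ j, M *ᵥ A.col j = ξ j • A.col j := by
  rw [← Matrix.ext_iff, forall_comm]
  simp only [mul_diagonal]
  simp only [funext_iff, mulVec, dotProduct, mul_apply, col_apply, Pi.smul_apply, smul_eq_mul,
    mul_comm (ξ _)]

theorem mul_eq_zero_iff_forall_row_mem_ker {R l o p : Type*} [CommSemiring R] [Fintype o]
    {M : Matrix l o R} {A : Matrix o p R} :
    M * A = 0 ↔ ∀ i, M i ∈ LinearMap.ker Aᵀ.mulVecLin := by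
  simp only [LinearMap.mem_ker, mulVecLin_apply, mulVec_transpose, ← mul_apply_eq_vecMul]
  exact ⟨fun h i => by rw [h]; rfl, fun h => funext h⟩

theorem finrank_ker_mulVecLin_transpose {K l o : Type*} [Field K] [Fintype l] [Fintype o]
    (A : Matrix l o K) : finrank K (LinearMap.ker Aᵀ.mulVecLin) = Fintype.card l - A.rank := by
  have := LinearMap.finrank_range_add_finrank_ker Aᵀ.mulVecLin
  rw [← rank_transpose, rank, Module.finrank_fintype_fun_eq_card] at *
  omega

end Matrix

open Matrix Finset

section SolutionSpace

variable {m n : ℕ} (A : Matrix (Fin m) (Fin n) ℝ)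

theorem mem_solSpace {p : Matrix (Fin m) (Fin m) ℝ × (Fin n → ℝ)} :
    p ∈ solSpace A ↔ p.1 * A = A * diagonal p.2 :=
  Iff.rfl

noncomputable def feasibleDiagonals : Submodule ℝ (Fin n → ℝ) :=
  (solSpace A).map (LinearMap.snd ℝ _ _)

theorem mem_feasibleDiagonals_iff {ξ : Fin n → ℝ} :
    ξ ∈ feasibleDiagonals A ↔ ∃ f : Module.End ℝ (Fin m → ℝ), ∀ j, f (A.col j) = ξ j • A.col j := by
  simp only [feasibleDiagonals, Submodule.mem_map, LinearMap.snd_apply, Prod.exists,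
    exists_eq_right, mem_solSpace, mul_eq_mul_diagonal_iff]
  constructor
  · rintro ⟨M, hM⟩
    exact ⟨toLin' M, fun j => by simpa using hM j⟩
  · rintro ⟨f, hf⟩
    exact ⟨LinearMap.toMatrix' f, fun j => by simpa using hf j⟩

theorem finrank_solSpace :
    finrank ℝ (solSpace A) = finrank ℝ (feasibleDiagonals A) + m * (m - A.rank) := by
  let π := (LinearMap.snd ℝ (Matrix (Fin m) (Fin m) ℝ) (Fin n → ℝ)).domRestrict (solSpace A)
  have hrange : LinearMap.range π = feasibleDiagonals A := by
    rw [LinearMap.range_domRestrict]; rfl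
  have hker : LinearMap.ker π ≃ₗ[ℝ] (Fin m → LinearMap.ker Aᵀ.mulVecLin) :=
    { toFun := fun p i => ⟨p.1.1.1 i, by
        have hp : p.1.1.1 * A = A * diagonal p.1.1.2 := p.1.2
        rw [show p.1.1.2 = 0 from p.2, diagonal_zero', Matrix.mul_zero,
          mul_eq_zero_iff_forall_row_mem_ker] at hp
        exact hp i⟩
      invFun := fun g => ⟨⟨(of fun i => (g i : Fin m → ℝ), 0), by
          rw [mem_solSpace, diagonal_zero', Matrix.mul_zero, mul_eq_zero_iff_forall_row_mem_ker]
          exact fun i => (g i).2⟩, rfl⟩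
      map_add' := fun _ _ => rfl
      map_smul' := fun _ _ => rfl
      left_inv := fun p => Subtype.ext <| Subtype.ext <| Prod.ext rfl p.2.symm
      right_inv := fun _ => rfl }
  rw [← LinearMap.finrank_range_add_finrank_ker π, hrange, hker.finrank_eq,
    Module.finrank_pi_fintype, finrank_ker_mulVecLin_transpose]
  simp

end SolutionSpace

section Clustering

variable {m n : ℕ} (A : Matrix (Fin m) (Fin n) ℝ)

structure IsClustering {ι : Type*} (U : ι → Submodule ℝ (Fin m → ℝ)) : Prop where
  ne_bot : ∀ i, U i ≠ ⊥
  indep : iSupIndep U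
  exists_mem : ∀ j, ∃ i, A.col j ∈ U i

variable {A} in
theorem IsClustering.card_le {ι : Type*} [Fintype ι] {U : ι → Submodule ℝ (Fin m → ℝ)}
    (hU : IsClustering A U) : Fintype.card ι ≤ m := by
  simpa using hU.indep.card_add_finrank_le hU.ne_bot (disjoint_bot_right (a := ⨆ i, U i))

theorem clusteringNumber_eq_sSup : clusteringNumber A =
    sSup {S | ∃ U : Fin S → Submodule ℝ (Fin m → ℝ), IsClustering A U} :=
  congrArg sSup <| Set.ext fun _ =>
    ⟨fun ⟨U, h₁, h₂, h₃⟩ => ⟨U, h₁, h₂, h₃⟩, fun ⟨U, h₁, h₂, h₃⟩ => ⟨U, h₁, h₂, h₃⟩⟩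

theorem bddAbove_setOf_isClustering :
    BddAbove {S | ∃ U : Fin S → Submodule ℝ (Fin m → ℝ), IsClustering A U} :=
  ⟨m, fun _ ⟨_, hU⟩ => by simpa using hU.card_le⟩

theorem clusteringNumber_eq_zero_or_exists_isClustering : clusteringNumber A = 0 ∨
    ∃ U : Fin (clusteringNumber A) → Submodule ℝ (Fin m → ℝ), IsClustering A U := by
  rw [clusteringNumber_eq_sSup]
  rcases Set.eq_empty_or_nonempty {S | ∃ U : Fin S → Submodule ℝ (Fin m → ℝ), IsClustering A U}
    with h | h
  · left; rw [h, csSup_empty]; rfl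
  · exact Or.inr (Nat.sSup_mem h (bddAbove_setOf_isClustering A))

variable {A}

theorem IsClustering.card_le_clusteringNumber {ι : Type*} [Fintype ι]
    {U : ι → Submodule ℝ (Fin m → ℝ)} (hU : IsClustering A U) :
    Fintype.card ι ≤ clusteringNumber A := by
  let e := Fintype.equivFin ι
  rw [clusteringNumber_eq_sSup]
  refine le_csSup (bddAbove_setOf_isClustering A) ⟨U ∘ e.symm, fun _ => hU.ne_bot _,
    hU.indep.comp e.symm.injective, fun j => ?_⟩
  obtain ⟨i, hi⟩ := hU.exists_mem j
  exact ⟨e i, by simpa using hi⟩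

theorem card_le_clusteringNumber {ι : Type*} [Fintype ι] {U : ι → Submodule ℝ (Fin m → ℝ)}
    (hne : ∀ i, U i ≠ ⊥) (hind : iSupIndep U) (hcov : ∀ j, A.col j ≠ 0 → ∃ i, A.col j ∈ U i) :
    Fintype.card ι ≤ clusteringNumber A := by
  rcases isEmpty_or_nonempty ι with hι | ⟨⟨i₀⟩⟩
  · simp
  refine IsClustering.card_le_clusteringNumber ⟨hne, hind, fun j => ?_⟩
  by_cases hj : A.col j = 0
  · exact ⟨i₀, hj ▸ zero_mem _⟩
  · exact hcov j hj

end Clustering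

section UpperBound

variable {m n : ℕ} (A : Matrix (Fin m) (Fin n) ℝ)

def clusterColumns {ι : Type*} (U : ι → Submodule ℝ (Fin m → ℝ)) (i : ι) : Set (Fin n) :=
  {j | A.col j ≠ 0 ∧ A.col j ∈ U i}

variable {A}

theorem indicator_singleton_mem_feasibleDiagonals {j : Fin n} (hj : A.col j = 0) :
    ({j} : Set (Fin n)).indicator 1 ∈ feasibleDiagonals A := by
  refine (mem_feasibleDiagonals_iff A).2 ⟨0, fun j' => ?_⟩
  by_cases h : j' = j
  · simp [h, hj]
  · simp [h]

variable (A) in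
theorem card_zeroColumns_le_finrank :
    Fintype.card {j // ∀ i, A i j = 0} ≤ finrank ℝ (feasibleDiagonals A) := by
  simpa using (feasibleDiagonals A).card_le_finrank_of_indicator_mem
    (fun j : {j // ∀ i, A i j = 0} => ({j.1} : Set (Fin n)))
    (fun _ _ hne => Set.disjoint_singleton.2 fun h => hne (Subtype.ext h))
    (fun _ => Set.singleton_nonempty _)
    (fun j => indicator_singleton_mem_feasibleDiagonals (funext j.2))

variable {ι : Type*} {U : ι → Submodule ℝ (Fin m → ℝ)}

theorem IsClustering.indicator_clusterColumns_mem (hU : IsClustering A U) (i : ι) :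
    (clusterColumns A U i).indicator 1 ∈ feasibleDiagonals A := by
  obtain ⟨f, hf_self, hf_zero⟩ := (hU.indep i).exists_linearMap_eq_self_and_eq_zero
  refine (mem_feasibleDiagonals_iff A).2 ⟨f, fun j => ?_⟩
  by_cases hj0 : A.col j = 0
  · simp [hj0]
  by_cases hji : A.col j ∈ U i
  · simp [clusterColumns, hj0, hji, hf_self _ hji]
  obtain ⟨k, hk⟩ := hU.exists_mem j
  have hki : k ≠ i := by rintro rfl; exact hji hk
  simp [clusterColumns, hj0, hji,
    hf_zero _ (Submodule.mem_iSup_of_mem k (Submodule.mem_iSup_of_mem hki hk))]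

theorem IsClustering.pairwise_disjoint_clusterColumns (hU : IsClustering A U) :
    Pairwise (Disjoint on clusterColumns A U) := fun _ _ hii' =>
  Set.disjoint_left.2 fun _ hj hj' =>
    hj.1 (Submodule.disjoint_def.1 (hU.indep.pairwiseDisjoint hii') _ hj.2 hj'.2)

open scoped Classical in
theorem IsClustering.card_nonempty_add_card_le (hU : IsClustering A U) [Fintype ι] :
    Fintype.card {i // (clusterColumns A U i).Nonempty} + Fintype.card {j // ∀ i, A i j = 0} ≤
      finrank ℝ (feasibleDiagonals A) := by
  let s := Sum.elim (fun i : {i // (clusterColumns A U i).Nonempty} => clusterColumns A U i)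
    fun j : {j // ∀ i, A i j = 0} => ({j.1} : Set (Fin n))
  have hdisj : Pairwise (Disjoint on s) := by
    rintro (_ | j) (_ | j') hne <;>
      simp only [s, onFun, Sum.elim_inl, Sum.elim_inr, Set.disjoint_singleton_left,
        Set.disjoint_singleton_right]
    · exact hU.pairwise_disjoint_clusterColumns fun h => hne (congrArg Sum.inl (Subtype.ext h))
    · exact fun hj => hj.1 (funext j'.2)
    · exact fun hj => hj.1 (funext j.2)
    · exact fun h => hne (congrArg Sum.inr (Subtype.ext h).symm)
  simpa using (feasibleDiagonals A).card_le_finrank_of_indicator_mem s hdisj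
    (by rintro (i | _); exacts [i.2, Set.singleton_nonempty _])
    (by rintro (i | j); exacts [hU.indicator_clusterColumns_mem i,
      indicator_singleton_mem_feasibleDiagonals (funext j.2)])

open scoped Classical in
theorem IsClustering.card_not_nonempty_add_rank_le (hU : IsClustering A U) [Fintype ι] :
    Fintype.card {i // ¬(clusterColumns A U i).Nonempty} + A.rank ≤ m := by
  have hC : Submodule.span ℝ (Set.range A.col) ≤
      ⨆ i ∈ {i | (clusterColumns A U i).Nonempty}, U i := by
    refine Submodule.span_le.2 (Set.range_subset_iff.2 fun j => ?_)
    by_cases hj : A.col j = 0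
    · simp [hj]
    obtain ⟨i, hi⟩ := hU.exists_mem j
    exact Submodule.mem_iSup_of_mem i (Submodule.mem_iSup_of_mem ⟨j, hj, hi⟩ hi)
  have hdisj := (hU.indep.disjoint_biSup_biSup (disjoint_compl_left
    (a := {i | (clusterColumns A U i).Nonempty}))).mono_right hC
  have := (hU.indep.comp Subtype.val_injective).card_add_finrank_le (fun i => hU.ne_bot i.1)
    (hdisj.mono_left (iSup_le fun i => le_biSup U i.2))
  rwa [finrank_fin_fun, ← rank_eq_finrank_span_cols] at this

theorem IsClustering.card_add_card_le (hU : IsClustering A U) [Fintype ι] :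
    Fintype.card ι + Fintype.card {j // ∀ i, A i j = 0} ≤
      finrank ℝ (feasibleDiagonals A) + (m - A.rank) := by
  classical
  have := hU.card_nonempty_add_card_le
  have := hU.card_not_nonempty_add_rank_le
  have := Fintype.card_subtype_compl fun i => (clusterColumns A U i).Nonempty
  have := Fintype.card_subtype_le fun i => (clusterColumns A U i).Nonempty
  omega

variable (A) in
theorem clusteringNumber_add_card_le :
    clusteringNumber A + Fintype.card {j // ∀ i, A i j = 0} ≤
      finrank ℝ (feasibleDiagonals A) + (m - A.rank) := by
  rcases clusteringNumber_eq_zero_or_exists_isClustering A with h | ⟨U, hU⟩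
  · rw [h, zero_add]
    exact le_add_right (card_zeroColumns_le_finrank A)
  · simpa using hU.card_add_card_le

end UpperBound

section LowerBound

variable {m n : ℕ} {A : Matrix (Fin m) (Fin n) ℝ}

theorem card_image_add_le_clusteringNumber {ξ : Fin n → ℝ} (hξ : ξ ∈ feasibleDiagonals A) :
    ((univ.filter fun j => A.col j ≠ 0).image ξ).card + (m - A.rank) ≤ clusteringNumber A := by
  classical
  obtain ⟨f, hf⟩ := (mem_feasibleDiagonals_iff A).1 hξ
  set T := (univ.filter fun j => A.col j ≠ 0).image ξ
  obtain ⟨W, hW⟩ := (Submodule.span ℝ (Set.range A.col)).exists_isCompl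
  have hWrank : finrank ℝ W = m - A.rank := by
    have := Submodule.finrank_add_eq_of_isCompl hW
    rw [finrank_fin_fun, ← rank_eq_finrank_span_cols] at this
    omega
  let b := Module.finBasisOfFinrankEq ℝ W hWrank
  let V := Sum.elim (fun c : T => Submodule.span ℝ (A.col '' (ξ ⁻¹' {c.1})))
    fun t => ℝ ∙ (b t : Fin m → ℝ)
  have hind : iSupIndep V :=
    ((iSupIndep_span_image_preimage_singleton hf).comp Subtype.val_injective).sumElim
      (b.linearIndependent.map' W.subtype W.ker_subtype).iSupIndep_span_singleton <|
      hW.disjoint.mono (iSup_le fun _ => Submodule.span_mono (Set.image_subset_range _ _))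
        (iSup_le fun t => (Submodule.span_singleton_le_iff_mem _ _).2 (b t).2)
  have hne : ∀ x, V x ≠ ⊥ := by
    rintro (⟨c, hc⟩ | t)
    · obtain ⟨j, hj, rfl⟩ := mem_image.1 hc
      exact (Submodule.ne_bot_iff _).2 ⟨A.col j, Submodule.subset_span ⟨j, rfl, rfl⟩,
        (mem_filter.1 hj).2⟩
    · simpa [V] using b.ne_zero t
  have hcov : ∀ j, A.col j ≠ 0 → ∃ x, A.col j ∈ V x := fun j hj =>
    ⟨.inl ⟨ξ j, mem_image_of_mem ξ (by simpa using hj)⟩, Submodule.subset_span ⟨j, rfl, rfl⟩⟩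
  simpa using card_le_clusteringNumber hne hind hcov

variable (A) in
theorem finrank_feasibleDiagonals_add_le : finrank ℝ (feasibleDiagonals A) + (m - A.rank) ≤
    clusteringNumber A + Fintype.card {j // ∀ i, A i j = 0} := by
  classical
  obtain ⟨ξ, hξ, hgen⟩ := (feasibleDiagonals A).exists_mem_forall_factorsThrough
  have hcl := card_image_add_le_clusteringNumber hξ
  set J := univ.filter fun j => A.col j ≠ 0
  have hZ : Fintype.card {j // ∀ i, A i j = 0} = Jᶜ.card := by
    rw [Fintype.card_subtype, compl_filter]
    simp [funext_iff]
  have hdim : finrank ℝ (feasibleDiagonals A) ≤ (J.image ξ).card + Jᶜ.card :=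
    calc finrank ℝ (feasibleDiagonals A) ≤ (univ.image ξ).card :=
          (feasibleDiagonals A).finrank_le_card_image_of_factorsThrough ξ hgen
      _ = (J.image ξ ∪ Jᶜ.image ξ).card := by rw [← image_union, union_compl]
      _ ≤ _ := (card_union_le _ _).trans (Nat.add_le_add_left card_image_le _)
  omega

end LowerBound

/-- For `A ∈ ℝ^{m×n}` of rank `r` with `Z` zero columns, the dimension of the solution space of
`M A = A diag(ξ)` equals `cl⊕(A) + (m-1)(m-r) + Z`. -/
theorem stmt6 {m n : ℕ} (A : Matrix (Fin m) (Fin n) ℝ) :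
    Module.finrank ℝ (solSpace A) =
      clusteringNumber A + (m - 1) * (m - A.rank) +
        Fintype.card {j : Fin n // ∀ i, A i j = 0} := by
  have hcl := le_antisymm (clusteringNumber_add_card_le A) (finrank_feasibleDiagonals_add_le A)
  have hm : m * (m - A.rank) = (m - 1) * (m - A.rank) + (m - A.rank) := by
    rcases m with _ | m <;> simp [Nat.succ_mul]
  rw [finrank_solSpace, hm]
  omega
end

section
/- Let (U_r, V_r, W_r)_{r=1}^F be an F-PD of the matrix multiplication tensor Φ_{m,p,n} over ℝ, and let I ⊆ {1,…,F} with |I| + n ≥ F + 1. Then the matrices {U_r}_{r∈I} span ℝ^{p×m}. -/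
def IsFPD (m p n F : ℕ) (U : Fin F → Matrix (Fin p) (Fin m) ℝ)
    (V : Fin F → Matrix (Fin n) (Fin p) ℝ) (W : Fin F → Matrix (Fin m) (Fin n) ℝ) : Prop :=
  ∀ (A : Matrix (Fin m) (Fin p) ℝ) (B : Matrix (Fin p) (Fin n) ℝ),
    A * B = ∑ r, ((U r * A).trace * (V r * B).trace) • W r

/-- If `(U_r, V_r, W_r)` is an `F`-PD of `Φ_{m,p,n}` and `I ⊆ {1,…,F}` with `|I| + n ≥ F + 1`,
then the matrices `{U_r}_{r ∈ I}` span `ℝ^{p×m}`. -/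
theorem stmt7 {m p n F : ℕ}
    (U : Fin F → Matrix (Fin p) (Fin m) ℝ) (V : Fin F → Matrix (Fin n) (Fin p) ℝ)
    (W : Fin F → Matrix (Fin m) (Fin n) ℝ)
    (h : IsFPD m p n F U V W)
    (I : Finset (Fin F)) (hI : I.card + n ≥ F + 1) :
    Submodule.span ℝ (U '' ↑I) = ⊤ := by
  by_contra hspan
  obtain ⟨f, hf0, hfmap⟩ := Submodule.exists_dual_map_eq_bot_of_lt_top
    (lt_top_iff_ne_top.mpr hspan) inferInstance
  set A : Matrix (Fin m) (Fin p) ℝ :=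
    Matrix.of (fun i j => f (Matrix.single j i 1)) with hA
  have key : ∀ X : Matrix (Fin p) (Fin m) ℝ, (X * A).trace = f X := by
    intro X
    conv_rhs => rw [Matrix.matrix_eq_sum_single X]
    rw [map_sum]
    rw [Matrix.trace]
    simp only [Matrix.diag, Matrix.mul_apply, hA, Matrix.of_apply, map_sum, map_smul,
      smul_eq_mul, Finset.sum_apply]
    apply Finset.sum_congr rfl
    intro a _
    apply Finset.sum_congr rfl
    intro b _
    rw [← smul_eq_mul, ← map_smul, Matrix.smul_single, smul_eq_mul, mul_one]
  have hfI : ∀ r ∈ I, (U r * A).trace = 0 := by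
    intro r hr
    rw [key]
    have : f (U r) ∈ (Submodule.span ℝ (U '' ↑I)).map f :=
      Submodule.mem_map_of_mem (Submodule.subset_span ⟨r, by simpa, rfl⟩)
    rwa [hfmap, Submodule.mem_bot] at this
  have hAne : A ≠ 0 := by
    intro hA0
    apply hf0
    ext X
    rw [← key X, hA0, Matrix.mul_zero]
    simp
  obtain ⟨i, j, hij⟩ : ∃ i j, A i j ≠ 0 := by
    by_contra hc
    push_neg at hc
    exact hAne (by ext i j; simpa using hc i j)
  set S : Submodule ℝ (Matrix (Fin m) (Fin n) ℝ) := Submodule.span ℝ (W '' ↑Iᶜ) with hS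
  have memS : ∀ B : Matrix (Fin p) (Fin n) ℝ, A * B ∈ S := by
    intro B
    rw [h A B]
    apply Submodule.sum_mem
    intro r _
    by_cases hr : r ∈ I
    · rw [hfI r hr, zero_mul, zero_smul]; exact S.zero_mem
    · exact S.smul_mem _ (Submodule.subset_span ⟨r, by simpa, rfl⟩)
  have hli : LinearIndependent ℝ (fun k : Fin n => A * Matrix.single j k (1 : ℝ)) := by
    rw [Fintype.linearIndependent_iff]
    intro g hg k
    have h2 := congrFun (congrFun hg i) k
    simp only [Finset.sum_apply, Matrix.sum_apply, Matrix.smul_apply, Matrix.mul_apply,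
      Matrix.single, Matrix.of_apply, mul_ite, mul_one, mul_zero, smul_eq_mul,
      Matrix.zero_apply] at h2
    rw [Finset.sum_eq_single k] at h2
    · simp only [and_true, Finset.sum_ite_eq, Finset.mem_univ, if_true] at h2
      rcases mul_eq_zero.mp h2 with h | h
      · exact h
      · exact absurd h hij
    · intro b _ hb
      have : ∀ l, (if b = k ∧ l = j then (1:ℝ) else 0) = 0 := by
        intro l; simp [hb]
      simp only [Finset.mul_sum]
      rw [Finset.sum_eq_zero]
      intro l _
      simp [hb]
    · intro hk; exact absurd (Finset.mem_univ k) hk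
  have hrange : Set.range (fun k : Fin n => A * Matrix.single j k (1 : ℝ)) ⊆ ↑S := by
    rintro _ ⟨k, rfl⟩
    exact memS _
  have hn_le : n ≤ Module.finrank ℝ S := by
    have := Submodule.finrank_mono (Submodule.span_le.mpr hrange)
    rwa [finrank_span_eq_card hli, Fintype.card_fin] at this
  have hS_le : Module.finrank ℝ S ≤ Iᶜ.card := by
    have h1 : S = Submodule.span ℝ ↑(Iᶜ.image W) := by rw [hS, Finset.coe_image]
    have h2 := finrank_span_finset_le_card (R := ℝ) (Iᶜ.image W)
    rw [Set.finrank] at h2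
    rw [h1]
    exact h2.trans (Finset.card_image_le)
  have hcompl : Iᶜ.card = F - I.card := by
    rw [Finset.card_compl, Fintype.card_fin]
  have hcard : I.card ≤ F := by
    simpa using Finset.card_le_card (Finset.subset_univ I)
  omega
end

section
/- Let A, A' ∈ ℝ^{m×n} both have full row-rank, no zero columns, and clustering number equal to 1. Let S be the space of solutions (M, ξ) ∈ ℝ^{m×m} × ℝ^n of M A = A' diag(ξ_1,…,ξ_n). If S contains a solution (M, ξ) with ξ_i ≠ 0 for all i, then dim(S) = 1. -/
/-- The solution space of the linear system `M A = A' diag(ξ)`. -/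
noncomputable def solSpace2 {m n : ℕ} (A A' : Matrix (Fin m) (Fin n) ℝ) :
    Submodule ℝ (Matrix (Fin m) (Fin m) ℝ × (Fin n → ℝ)) where
  carrier := {p | p.1 * A = A' * Matrix.diagonal p.2}
  add_mem' := by
    intro a b ha hb
    simp only [Set.mem_setOf_eq, Prod.fst_add, Prod.snd_add] at *
    have hd : Matrix.diagonal (a.2 + b.2) = Matrix.diagonal a.2 + Matrix.diagonal b.2 := by
      ext i j; by_cases h : i = j <;> simp [Matrix.diagonal_apply, h]
    rw [Matrix.add_mul, ha, hb, hd, Matrix.mul_add]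
  zero_mem' := by
    simp only [Set.mem_setOf_eq, Prod.fst_zero, Prod.snd_zero]
    have hd : Matrix.diagonal (0 : Fin n → ℝ) = 0 := by
      ext i j; by_cases h : i = j <;> simp [Matrix.diagonal_apply, h]
    rw [Matrix.zero_mul, hd, Matrix.mul_zero]
  smul_mem' := by
    intro c a ha
    simp only [Set.mem_setOf_eq, Prod.smul_fst, Prod.smul_snd] at *
    rw [Matrix.smul_mul, ha, Matrix.diagonal_smul, Matrix.mul_smul]

open Matrix Module


lemma clusterBound {m S : ℕ} (U : Fin S → Submodule ℝ (Fin m → ℝ))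
    (h1 : ∀ i, U i ≠ ⊥) (h2 : iSupIndep U) : S ≤ m := by
  classical
  have h := h2.subtype_ne_bot_le_finrank
  rw [Fintype.card_congr (Equiv.subtypeUnivEquiv h1), Fintype.card_fin,
    Module.finrank_fin_fun] at h
  exact h

lemma surj_of_rank_eq {m n : ℕ} {B : Matrix (Fin m) (Fin n) ℝ} (h : B.rank = m) :
    Function.Surjective B.mulVec := by
  have ht : LinearMap.range B.mulVecLin = ⊤ := by
    apply Submodule.eq_top_of_finrank_eq
    rw [show Module.finrank ℝ (LinearMap.range B.mulVecLin) = B.rank from rfl, h,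
      Module.finrank_fin_fun]
  have := LinearMap.range_eq_top.mp ht
  rwa [Matrix.coe_mulVecLin] at this

lemma colEq {m n : ℕ} {M : Matrix (Fin m) (Fin m) ℝ} {A A' : Matrix (Fin m) (Fin n) ℝ}
    {ξ : Fin n → ℝ} (h : M * A = A' * Matrix.diagonal ξ) (j : Fin n) :
    M.mulVec (fun k => A k j) = ξ j • (fun i => A' i j) := by
  funext i
  have h2 := congrFun (congrFun h i) j
  rw [Matrix.mul_apply, Matrix.mul_diagonal] at h2
  simpa [Matrix.mulVec, dotProduct, mul_comm] using h2

lemma clusterSet_bdd {m n : ℕ} (A : Matrix (Fin m) (Fin n) ℝ) :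
    BddAbove {S : ℕ | ∃ U : Fin S → Submodule ℝ (Fin m → ℝ),
      (∀ i, U i ≠ ⊥) ∧ iSupIndep U ∧ ∀ j : Fin n, ∃ i, (fun k => A k j) ∈ U i} := by
  refine ⟨m, fun S hS => ?_⟩
  obtain ⟨U, h1, h2, _⟩ := hS
  exact clusterBound U h1 h2

/-- Ratios are constant along columns, given clustering number one. -/
lemma eigConst {m n : ℕ} {A A' : Matrix (Fin m) (Fin n) ℝ}
    {M₀ M : Matrix (Fin m) (Fin m) ℝ} {ξ₀ ξ : Fin n → ℝ}
    (h0 : M₀ * A = A' * Matrix.diagonal ξ₀) (h : M * A = A' * Matrix.diagonal ξ)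
    (hξ0 : ∀ i, ξ₀ i ≠ 0) (hdet : IsUnit M₀.det)
    (hcols : ∀ j, (fun i => A i j) ≠ 0)
    (hcl : sSup {S : ℕ | ∃ U : Fin S → Submodule ℝ (Fin m → ℝ),
      (∀ i, U i ≠ ⊥) ∧ iSupIndep U ∧ ∀ j : Fin n, ∃ i, (fun k => A k j) ∈ U i} = 1) :
    ∀ j k, ξ j * (ξ₀ j)⁻¹ = ξ k * (ξ₀ k)⁻¹ := by
  classical
  set f : Module.End ℝ (Fin m → ℝ) := (M₀⁻¹ * M).mulVecLin with hf
  set c : Fin n → ℝ := fun j => ξ j * (ξ₀ j)⁻¹ with hcdef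
  have hcolj : ∀ j, (fun k => A k j) ∈ f.eigenspace (c j) := by
    intro j
    rw [Module.End.mem_eigenspace_iff]
    have key : M₀⁻¹.mulVec (fun i => A' i j) = (ξ₀ j)⁻¹ • (fun k => A k j) := by
      have h1 : M₀⁻¹.mulVec (M₀.mulVec (fun k => A k j)) = (fun k => A k j) := by
        rw [Matrix.mulVec_mulVec, Matrix.nonsing_inv_mul _ hdet, Matrix.one_mulVec]
      rw [colEq h0 j, Matrix.mulVec_smul] at h1
      rw [← h1, smul_smul, inv_mul_cancel₀ (hξ0 j), one_smul]
    show (M₀⁻¹ * M).mulVec (fun k => A k j) = c j • (fun k => A k j)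
    rw [← Matrix.mulVec_mulVec, colEq h j, Matrix.mulVec_smul, key, smul_smul]
  by_contra hne
  push_neg at hne
  obtain ⟨j₀, k₀, hjk⟩ := hne
  set V : Finset ℝ := Finset.image c Finset.univ with hV
  have hV2 : 1 < V.card := by
    refine Finset.one_lt_card.mpr ⟨c j₀, ?_, c k₀, ?_, hjk⟩ <;>
      exact Finset.mem_image_of_mem c (Finset.mem_univ _)
  set e : Fin V.card ≃ {x // x ∈ V} := V.equivFin.symm with he
  set U : Fin V.card → Submodule ℝ (Fin m → ℝ) := fun i => f.eigenspace (e i : ℝ) with hU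
  have hUne : ∀ i, U i ≠ ⊥ := by
    intro i hbot
    obtain ⟨j, _, hj⟩ := Finset.mem_image.mp (e i).2
    have : (fun k => A k j) ∈ U i := by rw [hU]; simp only; rw [← hj]; exact hcolj j
    rw [hbot, Submodule.mem_bot] at this
    exact hcols j this
  have hInd : iSupIndep U :=
    f.eigenspaces_iSupIndep.comp (Subtype.val_injective.comp e.injective)
  have hmem : V.card ∈ {S : ℕ | ∃ U : Fin S → Submodule ℝ (Fin m → ℝ),
      (∀ i, U i ≠ ⊥) ∧ iSupIndep U ∧ ∀ j : Fin n, ∃ i, (fun k => A k j) ∈ U i} := by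
    refine ⟨U, hUne, hInd, fun j => ?_⟩
    refine ⟨e.symm ⟨c j, Finset.mem_image_of_mem c (Finset.mem_univ j)⟩, ?_⟩
    have hx : ((e (e.symm ⟨c j, Finset.mem_image_of_mem c (Finset.mem_univ j)⟩)) : ℝ) = c j := by
      rw [Equiv.apply_symm_apply]
    rw [hU]; simp only; rw [hx]; exact hcolj j
  have := le_csSup (clusterSet_bdd A) hmem
  rw [hcl] at this
  exact absurd this (not_le.mpr hV2)

theorem stmt10_aux {m n : ℕ} (A A' : Matrix (Fin m) (Fin n) ℝ)
    (hrank : A.rank = m) (hrank' : A'.rank = m)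
    (hcols : ∀ j, (fun i => A i j) ≠ 0) (hcols' : ∀ j, (fun i => A' i j) ≠ 0)
    (hcl : sSup {S : ℕ | ∃ U : Fin S → Submodule ℝ (Fin m → ℝ),
      (∀ i, U i ≠ ⊥) ∧ iSupIndep U ∧ ∀ j : Fin n, ∃ i, (fun k => A k j) ∈ U i} = 1)
    (M₀ : Matrix (Fin m) (Fin m) ℝ) (ξ₀ : Fin n → ℝ)
    (h0 : M₀ * A = A' * Matrix.diagonal ξ₀) (hξ0 : ∀ i, ξ₀ i ≠ 0)
    (sol : Submodule ℝ (Matrix (Fin m) (Fin m) ℝ × (Fin n → ℝ)))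
    (hsolmem : ∀ M ξ, ((M, ξ) ∈ sol ↔ M * A = A' * Matrix.diagonal ξ)) :
    Module.finrank ℝ sol = 1 := by
  classical
  -- m and n are positive
  have hm : 0 < m := by
    have hne : {S : ℕ | ∃ U : Fin S → Submodule ℝ (Fin m → ℝ),
        (∀ i, U i ≠ ⊥) ∧ iSupIndep U ∧ ∀ j : Fin n, ∃ i, (fun k => A k j) ∈ U i}.Nonempty := by
      by_contra hemp
      rw [Set.not_nonempty_iff_eq_empty] at hemp
      rw [hemp, csSup_empty] at hcl
      simp at hcl
    have h1mem := Nat.sSup_mem hne (clusterSet_bdd A)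
    rw [hcl] at h1mem
    obtain ⟨U, hU1, -, -⟩ := h1mem
    obtain ⟨x, hx, hx0⟩ := (Submodule.ne_bot_iff _).mp (hU1 0)
    by_contra hmc
    have hm0 : m = 0 := Nat.le_zero.mp (Nat.not_lt.mp hmc)
    subst hm0
    exact hx0 (funext fun i => i.elim0)
  have hn : 0 < n := lt_of_lt_of_le hm (hrank ▸ A.rank_le_width)
  set j₀ : Fin n := ⟨0, hn⟩
  -- M₀ is invertible
  have hdiag : IsUnit (Matrix.diagonal ξ₀).det := by
    rw [Matrix.det_diagonal]
    exact isUnit_iff_ne_zero.mpr (Finset.prod_ne_zero_iff.mpr fun i _ => hξ0 i)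
  have hMArank : (M₀ * A).rank = m := by
    rw [h0, Matrix.rank_mul_eq_left_of_isUnit_det _ _ hdiag, hrank']
  have hM₀rank : M₀.rank = m :=
    le_antisymm M₀.rank_le_width (hMArank.symm.trans_le (Matrix.rank_mul_le_left M₀ A))
  have hM₀unit : IsUnit M₀ := Matrix.mulVec_surjective_iff_isUnit.mp (surj_of_rank_eq hM₀rank)
  have hdet0 : IsUnit M₀.det := (Matrix.isUnit_iff_isUnit_det M₀).mp hM₀unit
  -- the solution space is the span of (M₀, ξ₀)
  have hspan : sol = Submodule.span ℝ {(M₀, ξ₀)} := by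
    apply le_antisymm
    · rintro ⟨M, ξ⟩ hp
      have h : M * A = A' * Matrix.diagonal ξ := (hsolmem M ξ).mp hp
      have hc := eigConst h0 h hξ0 hdet0 hcols hcl
      have hξ : ξ = (ξ j₀ * (ξ₀ j₀)⁻¹) • ξ₀ := by
        funext j
        show ξ j = (ξ j₀ * (ξ₀ j₀)⁻¹) * ξ₀ j
        rw [← hc j j₀, mul_assoc, inv_mul_cancel₀ (hξ0 j), mul_one]
      set t : ℝ := ξ j₀ * (ξ₀ j₀)⁻¹ with ht
      have hMM : M = t • M₀ := by
        have hz : (M - t • M₀) * A = 0 := by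
          rw [Matrix.sub_mul, h, Matrix.smul_mul, h0, ← Matrix.mul_smul,
            ← Matrix.diagonal_smul, ← hξ, sub_self]
        have hs := surj_of_rank_eq hrank
        have hv : ∀ v, (M - t • M₀).mulVec v = 0 := by
          intro v
          obtain ⟨w, hw⟩ := hs v
          rw [← hw, Matrix.mulVec_mulVec, hz, Matrix.zero_mulVec]
        have hz2 : M - t • M₀ = 0 := by
          ext i j
          have := congrFun (hv (Pi.single j 1)) i
          simpa using this
        exact sub_eq_zero.mp hz2
      have : (M, ξ) = t • (M₀, ξ₀) := by rw [hMM, hξ]; rfl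
      rw [this]
      exact Submodule.smul_mem _ t (Submodule.mem_span_singleton_self _)
    · rw [Submodule.span_le, Set.singleton_subset_iff]
      exact (hsolmem M₀ ξ₀).mpr h0
  rw [hspan]
  refine finrank_span_singleton ?_
  intro hh
  exact hξ0 j₀ (by have := congrFun (congrArg Prod.snd hh) j₀; simpa using this)


/-- If `A, A'` have full row-rank, no zero columns and clustering number one, and the system
`M A = A' diag(ξ)` has a solution with all `ξ_i ≠ 0`, then its solution space is
one-dimensional. -/
theorem stmt10 {m n : ℕ} (A A' : Matrix (Fin m) (Fin n) ℝ)
    (hrank : A.rank = m) (hrank' : A'.rank = m)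
    (hcols : ∀ j, (fun i => A i j) ≠ 0) (hcols' : ∀ j, (fun i => A' i j) ≠ 0)
    (hcl : clusteringNumber A = 1) (hcl' : clusteringNumber A' = 1)
    (hsol : ∃ M ξ, (M, ξ) ∈ solSpace2 A A' ∧ ∀ i, ξ i ≠ 0) :
    Module.finrank ℝ (solSpace2 A A') = 1 := by
  obtain ⟨M₀, ξ₀, hmem, hξ0⟩ := hsol
  have h0 : M₀ * A = A' * Matrix.diagonal ξ₀ := hmem
  have hcl2 : sSup {S : ℕ | ∃ U : Fin S → Submodule ℝ (Fin m → ℝ),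
      (∀ i, U i ≠ ⊥) ∧ iSupIndep U ∧ ∀ j : Fin n, ∃ i, (fun k => A k j) ∈ U i} = 1 := hcl
  exact stmt10_aux A A' hrank hrank' hcols hcols' hcl2 M₀ ξ₀ h0 hξ0 (solSpace2 A A')
    (fun M ξ => Iff.rfl)
end

section
/- Suppose an F-PD (U_r, V_r, W_r)_{r=1}^F of Φ_{m,p,n} over ℝ is (scaling+trace)-equivalent to a discrete F-PD (U'_r, V'_r, W'_r) with all entries in qℤ for some q ≠ 0. Then for every choice of integers β_1,…,β_F, the characteristic polynomial of (1/q³) Σ_{r=1}^F β_r W_r V_r U_r has integer coefficients. -/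
/-!
Undoing the equivalence gives `P⁻¹ (W_r V_r U_r) P = W'_r V'_r U'_r`: the base changes `R` and `Q`
telescope and the scalars contribute `λ_r μ_r ν_r = 1`. Hence `(1/q³) Σ β_r W_r V_r U_r` is similar
to `(1/q³) Σ β_r W'_r V'_r U'_r`, which is an integer matrix because every `W'_r V'_r U'_r` lies in
`q³ M(ℤ)`. Similar matrices share their characteristic polynomial, and that of an integer matrix
has integer coefficients.
-/

open Polynomial

namespace Matrix

variable {R : Type*} [CommRing R] {l m n : Type*}

theorem exists_eq_smul_map_intCast {A : Matrix m n R} {q : R}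
    (hA : ∀ i j, ∃ k : ℤ, A i j = q * k) :
    ∃ a : Matrix m n ℤ, A = q • a.map (Int.cast : ℤ → R) := by
  choose a ha using hA
  exact ⟨Matrix.of a, by ext i j; simp [ha]⟩

theorem map_intCast_sum_zsmul {ι : Type*} (s : Finset ι) (β : ι → ℤ) (N : ι → Matrix m n ℤ) :
    (∑ r ∈ s, β r • N r).map (Int.cast : ℤ → R) =
      ∑ r ∈ s, (β r : R) • (N r).map (Int.cast : ℤ → R) := by
  change AddMonoidHom.mapMatrix (Int.castRingHom R : ℤ →+ R) _ = _
  simp only [map_sum, map_zsmul, Int.cast_smul_eq_zsmul]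
  rfl

theorem smul_map_intCast_mul_mul [Fintype l] [Fintype n] (q : R) (a : Matrix m n ℤ)
    (b : Matrix n l ℤ) (c : Matrix l m ℤ) :
    (q • a.map (Int.cast : ℤ → R)) * (q • b.map (Int.cast : ℤ → R)) *
      (q • c.map (Int.cast : ℤ → R)) =
      q ^ 3 • (a * b * c).map (Int.cast : ℤ → R) := by
  rw [show (Int.cast : ℤ → R) = Int.castRingHom R from rfl, Matrix.map_mul, Matrix.map_mul]
  simp only [Matrix.smul_mul, Matrix.mul_smul, smul_smul]
  ring_nf

variable [Fintype n] [DecidableEq n]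

theorem charpoly_inv_mul_mul_of_isUnit {P : Matrix n n R} (hP : IsUnit P) (M : Matrix n n R) :
    (P⁻¹ * M * P).charpoly = M.charpoly := by
  obtain ⟨P, rfl⟩ := hP
  exact charpoly_units_conj' P M

theorem exists_charpoly_coeff_map_intCast_eq (N : Matrix n n ℤ) (i : ℕ) :
    ∃ k : ℤ, (N.map (Int.cast : ℤ → R)).charpoly.coeff i = k :=
  ⟨N.charpoly.coeff i, by
    rw [show N.map (Int.cast : ℤ → R) = N.map (Int.castRingHom R) from rfl, charpoly_map,
      coeff_map, eq_intCast]⟩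

theorem inv_mul_mul_mul_mul_eq_of_scaling_equiv [Fintype l] [Fintype m] [DecidableEq l]
    [DecidableEq m] {P : Matrix m m R} {Q : Matrix l l R}
    {S : Matrix n n R} (hQ : IsUnit Q) (hS : IsUnit S)
    {U U' : Matrix l m R} {V V' : Matrix n l R} {W W' : Matrix m n R} {a b c : R}
    (habc : a * b * c = 1) (hU : a • U' = Q⁻¹ * U * P) (hV : b • V' = S⁻¹ * V * Q)
    (hW : c • W' = P⁻¹ * W * S) :
    P⁻¹ * (W * V * U) * P = W' * V' * U' := by
  have hQd := (isUnit_iff_isUnit_det Q).mp hQ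
  have hSd := (isUnit_iff_isUnit_det S).mp hS
  calc P⁻¹ * (W * V * U) * P = (P⁻¹ * W * S) * (S⁻¹ * V * Q) * (Q⁻¹ * U * P) := by
        simp only [Matrix.mul_assoc, mul_nonsing_inv_cancel_left _ _ hSd,
          mul_nonsing_inv_cancel_left _ _ hQd]
    _ = (a * b * c) • (W' * V' * U') := by
        rw [← hU, ← hV, ← hW]
        simp only [Matrix.smul_mul, Matrix.mul_smul, smul_smul]
        ring_nf
    _ = W' * V' * U' := by rw [habc, one_smul]

end Matrix

open Matrix

theorem stmt15_general {m p n F : ℕ} (q : ℝ) (hq : q ≠ 0)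
    (U U' : Fin F → Matrix (Fin p) (Fin m) ℝ) (V V' : Fin F → Matrix (Fin n) (Fin p) ℝ)
    (W W' : Fin F → Matrix (Fin m) (Fin n) ℝ)
    (P : Matrix (Fin m) (Fin m) ℝ) (Q : Matrix (Fin p) (Fin p) ℝ)
    (R : Matrix (Fin n) (Fin n) ℝ)
    (hP : IsUnit P) (hQ : IsUnit Q) (hR : IsUnit R)
    (lam mu nu : Fin F → ℝ) (hscale : ∀ r, lam r * mu r * nu r = 1)
    (hU : ∀ r, lam r • U' r = Q⁻¹ * U r * P)
    (hV : ∀ r, mu r • V' r = R⁻¹ * V r * Q)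
    (hW : ∀ r, nu r • W' r = P⁻¹ * W r * R)
    (hU' : ∀ r i j, ∃ k : ℤ, U' r i j = q * k)
    (hV' : ∀ r i j, ∃ k : ℤ, V' r i j = q * k)
    (hW' : ∀ r i j, ∃ k : ℤ, W' r i j = q * k) :
    ∀ β : Fin F → ℤ, ∀ i, ∃ k : ℤ,
      ((1 / q ^ 3) • ∑ r, (β r : ℝ) • (W r * V r * U r)).charpoly.coeff i = (k : ℝ) := by
  intro β i
  choose u hu using fun r => exists_eq_smul_map_intCast (hU' r)
  choose v hv using fun r => exists_eq_smul_map_intCast (hV' r)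
  choose w hw using fun r => exists_eq_smul_map_intCast (hW' r)
  have hconj : P⁻¹ * ((1 / q ^ 3) • ∑ r, (β r : ℝ) • (W r * V r * U r)) * P =
      (∑ r, β r • (w r * v r * u r)).map (Int.cast : ℤ → ℝ) :=
    calc P⁻¹ * ((1 / q ^ 3) • ∑ r, (β r : ℝ) • (W r * V r * U r)) * P
        = (1 / q ^ 3) • ∑ r, (β r : ℝ) • (P⁻¹ * (W r * V r * U r) * P) := by
          simp only [Matrix.mul_smul, Matrix.smul_mul, Matrix.mul_sum, Matrix.sum_mul]
      _ = (1 / q ^ 3) •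
            ∑ r, (β r : ℝ) • (q ^ 3 • (w r * v r * u r).map (Int.cast : ℤ → ℝ)) := by
          simp only [inv_mul_mul_mul_mul_eq_of_scaling_equiv hQ hR (hscale _) (hU _) (hV _)
            (hW _), hu, hv, hw, smul_map_intCast_mul_mul]
      _ = (∑ r, β r • (w r * v r * u r)).map (Int.cast : ℤ → ℝ) := by
          rw [map_intCast_sum_zsmul, Finset.smul_sum]
          congr! 1 with r
          rw [smul_smul, smul_smul, mul_right_comm, one_div_mul_cancel (pow_ne_zero 3 hq), one_mul]
  rw [← charpoly_inv_mul_mul_of_isUnit hP, hconj]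
  exact exists_charpoly_coeff_map_intCast_eq _ i

/-- If an `F`-PD of `Φ_{m,p,n}` is (scaling+trace)-equivalent to a discrete `F`-PD whose entries
all lie in `qℤ` (`q ≠ 0`), then for every choice of integers `β_r`, the characteristic polynomial
of `(1/q³) Σ_r β_r W_r V_r U_r` has integer coefficients. -/
theorem stmt15 {m p n F : ℕ} (q : ℝ) (hq : q ≠ 0)
    (U U' : Fin F → Matrix (Fin p) (Fin m) ℝ) (V V' : Fin F → Matrix (Fin n) (Fin p) ℝ)
    (W W' : Fin F → Matrix (Fin m) (Fin n) ℝ)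
    (h : IsFPD m p n F U V W) (h' : IsFPD m p n F U' V' W')
    (P : Matrix (Fin m) (Fin m) ℝ) (Q : Matrix (Fin p) (Fin p) ℝ)
    (R : Matrix (Fin n) (Fin n) ℝ)
    (hP : IsUnit P) (hQ : IsUnit Q) (hR : IsUnit R)
    (lam mu nu : Fin F → ℝ) (hscale : ∀ r, lam r * mu r * nu r = 1)
    (hU : ∀ r, lam r • U' r = Q⁻¹ * U r * P)
    (hV : ∀ r, mu r • V' r = R⁻¹ * V r * Q)
    (hW : ∀ r, nu r • W' r = P⁻¹ * W r * R)
    (hU' : ∀ r i j, ∃ k : ℤ, U' r i j = q * k)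
    (hV' : ∀ r i j, ∃ k : ℤ, V' r i j = q * k)
    (hW' : ∀ r i j, ∃ k : ℤ, W' r i j = q * k) :
    ∀ β : Fin F → ℤ, ∀ i, ∃ k : ℤ,
      ((1 / q ^ 3) • ∑ r, (β r : ℝ) • (W r * V r * U r)).charpoly.coeff i = (k : ℝ) :=
  stmt15_general q hq U U' V V' W W' P Q R hP hQ hR lam mu nu hscale hU hV hW hU' hV' hW'
end

section
/- Any two 2-term polyadic decompositions of Φ_{1,2,1} (the scalar product of two vectors in ℝ², viewed as multiplication of 1×2 by 2×1 matrices) are equivalent under scaling and trace transformations. -/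
/-!
Write `A`, `B` for the matrices with rows `U r`, `V r`. A decomposition says exactly
`Aᵀ * diagonal W * B = 1`, so the `U r` form a basis, every `W r` is nonzero, and the vectors
`W r • V r` form its dual basis (the columns of `A⁻¹`). Two decompositions are therefore
related by the change of basis `Q = Aᵀ * A'ᵀ⁻¹`, with the identity permutation, `p = ρ = 1`,
and the rescaling `V r ↦ (W' r / W r) • V' r`.
-/

open Matrix

variable {K n : Type*} [Field K] [Fintype n] [DecidableEq n]

def IsDotProductDecomp (U V : n → n → K) (W : n → K) : Prop :=
  ∀ u v : n → K, u ⬝ᵥ v = ∑ r, (U r ⬝ᵥ u) * (V r ⬝ᵥ v) * W r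

theorem transpose_of_mulVec_single_one (U : n → n → K) (r : n) :
    (of U)ᵀ *ᵥ Pi.single r 1 = U r := by
  ext i
  simp

namespace IsDotProductDecomp

variable {U V U' V' : n → n → K} {W W' : n → K}

theorem transpose_mul_diagonal_mul (h : IsDotProductDecomp U V W) :
    (of U)ᵀ * (diagonal W * of V) = 1 := by
  ext i j
  rw [mul_apply]
  simpa [diagonal_mul, one_apply, Pi.single_apply, eq_comm, mul_comm, mul_left_comm] using
    (h (Pi.single i 1) (Pi.single j 1)).symm

theorem isUnit_det (h : IsDotProductDecomp U V W) : IsUnit (of U).det := by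
  rw [← det_transpose]
  exact isUnit_det_of_right_inverse h.transpose_mul_diagonal_mul

theorem ne_zero (h : IsDotProductDecomp U V W) (r : n) : W r ≠ 0 := by
  have hdet := congrArg det h.transpose_mul_diagonal_mul
  rw [det_mul, det_mul, det_diagonal, det_one] at hdet
  exact Finset.prod_ne_zero_iff.mp (left_ne_zero_of_mul (right_ne_zero_of_mul_eq_one hdet)) r
    (Finset.mem_univ r)

theorem eq_inv_smul_inv_mulVec (h : IsDotProductDecomp U V W) (r : n) :
    V r = (W r)⁻¹ • ((of U)⁻¹ *ᵥ Pi.single r 1) := by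
  have hinv : (of U)⁻¹ = (of V)ᵀ * diagonal W := by
    rw [← transpose_transpose (of U)⁻¹, transpose_nonsing_inv,
      inv_eq_right_inv h.transpose_mul_diagonal_mul, transpose_mul, diagonal_transpose]
  ext i
  simp [hinv]
  field_simp [h.ne_zero r]

theorem exists_change_of_basis (h : IsDotProductDecomp U V W)
    (h' : IsDotProductDecomp U' V' W') :
    ∃ Q : Matrix n n K, IsUnit Q ∧ (∀ r, U' r = Q⁻¹ *ᵥ U r) ∧
      ∀ r, (W' r / W r) • V' r = Qᵀ *ᵥ V r := by
  set A := of U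
  set A' := of U'
  have hA : IsUnit Aᵀ.det := by rw [det_transpose]; exact h.isUnit_det
  have hA' : IsUnit A'ᵀ.det := by rw [det_transpose]; exact h'.isUnit_det
  refine ⟨Aᵀ * A'ᵀ⁻¹, ?_, fun r => ?_, fun r => ?_⟩
  · rw [isUnit_iff_isUnit_det, det_mul, det_nonsing_inv]
    exact hA.mul hA'.ringInverse
  · rw [Matrix.mul_inv_rev, nonsing_inv_nonsing_inv _ hA', ← transpose_of_mulVec_single_one U,
      mulVec_mulVec, mul_assoc, nonsing_inv_mul _ hA, mul_one, transpose_of_mulVec_single_one]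
  · rw [transpose_mul, transpose_transpose, ← transpose_nonsing_inv, transpose_transpose,
      h.eq_inv_smul_inv_mulVec, h'.eq_inv_smul_inv_mulVec, mulVec_smul, mulVec_mulVec,
      mul_assoc, mul_nonsing_inv _ h.isUnit_det, mul_one, smul_smul]
    congr 1
    field_simp [h'.ne_zero r]

end IsDotProductDecomp

/-- Any two 2-term polyadic decompositions of `Φ_{1,2,1}` (the scalar product on `ℝ²`) are
equivalent under permutation, scaling and trace transformations (with `m = n = 1`, `p = 2`,
so that `P` and `R` are nonzero scalars and `Q ∈ GL(2,ℝ)`). -/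
theorem stmt16 (U V U' V' : Fin 2 → (Fin 2 → ℝ)) (W W' : Fin 2 → ℝ)
    (h : ∀ u v : Fin 2 → ℝ, u ⬝ᵥ v = ∑ r, (U r ⬝ᵥ u) * (V r ⬝ᵥ v) * W r)
    (h' : ∀ u v : Fin 2 → ℝ, u ⬝ᵥ v = ∑ r, (U' r ⬝ᵥ u) * (V' r ⬝ᵥ v) * W' r) :
    ∃ (σ : Equiv.Perm (Fin 2)) (Q : Matrix (Fin 2) (Fin 2) ℝ) (p ρ : ℝ)
      (lam mu nu : Fin 2 → ℝ),
      IsUnit Q ∧ p ≠ 0 ∧ ρ ≠ 0 ∧ (∀ r, lam r * mu r * nu r = 1) ∧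
      (∀ r, lam r • U' r = p • (Q⁻¹ *ᵥ U (σ r))) ∧
      (∀ r, mu r • V' r = ρ⁻¹ • (Qᵀ *ᵥ V (σ r))) ∧
      (∀ r, nu r * W' r = p⁻¹ * W (σ r) * ρ) := by
  have hW : ∀ r, W r ≠ 0 := IsDotProductDecomp.ne_zero h
  have hW' : ∀ r, W' r ≠ 0 := IsDotProductDecomp.ne_zero h'
  obtain ⟨Q, hQ, hU, hV⟩ := IsDotProductDecomp.exists_change_of_basis h h'
  refine ⟨Equiv.refl _, Q, 1, 1, fun _ => 1, fun r => W' r / W r, fun r => W r / W' r, hQ,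
    one_ne_zero, one_ne_zero, fun r => ?_, fun r => ?_, fun r => ?_, fun r => ?_⟩
  · field_simp [hW r, hW' r]
  · simp [hU r]
  · simp [hV r]
  · simp [hW' r]
end
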